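/- arXiv:2102.03282 — 8 statements merged into one kernel-verified Lean document; each statement's English description precedes it below -/
import Mathlib

section
/- Let m ≥ 1, let F be a nonempty bounded subset of ℝ^m, let λ ≥ 0, and let w ∈ ℝ^m satisfy w = (1+λ)u − λv for some u, v ∈ conv(F). Then R̂(F) ≤ R̂(F ∪ {w}) ≤ (1+λ)·R̂(F). (Abstract form of Theorem 1: adding to a free function class a single function that admits a free-robustness decomposition with robustness λ increases the empirical Rademacher complexity by a factor of at most 1+λ.) -/
open Finset

/-- The empirical Rademacher complexity of a set `A ⊆ ℝ^m`:
`R̂(A) = 2^{-m} · Σ_{ε ∈ {-1,1}^m} sup_{v ∈ A} (1/m) Σ_i ε_i v_i`,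
where sign vectors are encoded by `ε : Fin m → Bool` (`true ↦ 1`, `false ↦ -1`). -/
noncomputable def radComp (m : ℕ) (A : Set (Fin m → ℝ)) : ℝ :=
  ((2 : ℝ) ^ m)⁻¹ * ∑ ε : Fin m → Bool,
    sSup ((fun v => (1 / (m : ℝ)) * ∑ i, (if ε i then (1 : ℝ) else -1) * v i) '' A)

noncomputable def feps (m : ℕ) (ε : Fin m → Bool) (x : Fin m → ℝ) : ℝ :=
  (1 / (m : ℝ)) * ∑ i, (if ε i then (1 : ℝ) else -1) * x i

lemma feps_linear (m : ℕ) (ε : Fin m → Bool) : IsLinearMap ℝ (feps m ε) := by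
  constructor
  · intro x y
    simp only [feps, Pi.add_apply, mul_add, Finset.sum_add_distrib]
  · intro c x
    simp only [feps, Pi.smul_apply, smul_eq_mul]
    rw [show (∑ i, (if ε i then (1:ℝ) else -1) * (c * x i))
        = c * ∑ i, (if ε i then (1:ℝ) else -1) * x i by
      rw [Finset.mul_sum]; congr 1; ext i; ring]
    ring

lemma feps_neg (m : ℕ) (ε : Fin m → Bool) (x : Fin m → ℝ) :
    feps m (fun i => !ε i) x = - feps m ε x := by
  simp only [feps]
  rw [show (∑ i, (if !ε i then (1:ℝ) else -1) * x i)
      = - ∑ i, (if ε i then (1:ℝ) else -1) * x i by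
    rw [← Finset.sum_neg_distrib]; congr 1; ext i; cases ε i <;> simp]
  ring

lemma feps_bdd (m : ℕ) (ε : Fin m → Bool) {F : Set (Fin m → ℝ)}
    (hFb : Bornology.IsBounded F) : BddAbove (feps m ε '' F) := by
  obtain ⟨C, hC⟩ := hFb.exists_norm_le
  refine ⟨(1 / (m : ℝ)) * (m * C), ?_⟩
  rintro _ ⟨x, hx, rfl⟩
  have h1 : ∀ i, (if ε i then (1:ℝ) else -1) * x i ≤ C := by
    intro i
    have h2 : |(if ε i then (1:ℝ) else -1) * x i| = |x i| := by
      cases ε i <;> simp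
    calc (if ε i then (1:ℝ) else -1) * x i ≤ |(if ε i then (1:ℝ) else -1) * x i| :=
          le_abs_self _
      _ = |x i| := h2
      _ ≤ ‖x‖ := norm_le_pi_norm x i
      _ ≤ C := hC x hx
  have : (∑ i, (if ε i then (1:ℝ) else -1) * x i) ≤ ∑ _i : Fin m, C :=
    Finset.sum_le_sum (fun i _ => h1 i)
  simp only [Finset.sum_const, Finset.card_univ, Fintype.card_fin, nsmul_eq_mul] at this
  have hnn : (0:ℝ) ≤ 1 / (m : ℝ) := by positivity
  exact mul_le_mul_of_nonneg_left this hnn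

lemma feps_convexHull_le (m : ℕ) (ε : Fin m → Bool) {F : Set (Fin m → ℝ)}
    (hFb : Bornology.IsBounded F) {u : Fin m → ℝ} (hu : u ∈ convexHull ℝ F) :
    feps m ε u ≤ sSup (feps m ε '' F) := by
  have hsub : F ⊆ {x | feps m ε x ≤ sSup (feps m ε '' F)} := fun x hx =>
    le_csSup (feps_bdd m ε hFb) ⟨x, hx, rfl⟩
  have hconv : Convex ℝ {x | feps m ε x ≤ sSup (feps m ε '' F)} :=
    convex_halfSpace_le (feps_linear m ε) _
  exact convexHull_min hsub hconv hu

lemma aux_max (a b x lam : ℝ) (hlam : 0 ≤ lam) (hab : 0 ≤ a + b)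
    (h1 : x ≤ (1 + lam) * a + lam * b) (h2 : -x ≤ (1 + lam) * b + lam * a) :
    max x a + max (-x) b ≤ (1 + lam) * (a + b) := by
  rcases max_cases x a with ⟨e1, _⟩ | ⟨e1, _⟩ <;>
    rcases max_cases (-x) b with ⟨e2, _⟩ | ⟨e2, _⟩ <;>
    rw [e1, e2] <;> nlinarith

theorem stmt0 (m : ℕ) (hm : 1 ≤ m) (F : Set (Fin m → ℝ)) (hF : F.Nonempty)
    (hFb : Bornology.IsBounded F) (lam : ℝ) (hlam : 0 ≤ lam) (w u v : Fin m → ℝ)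
    (hu : u ∈ convexHull ℝ F) (hv : v ∈ convexHull ℝ F)
    (hw : w = (1 + lam) • u - lam • v) :
    radComp m F ≤ radComp m (F ∪ {w}) ∧
      radComp m (F ∪ {w}) ≤ (1 + lam) * radComp m F := by
  set S : (Fin m → Bool) → ℝ := fun ε => sSup (feps m ε '' F) with hS
  set e : (Fin m → Bool) → (Fin m → Bool) := fun ε i => !ε i with he
  have heinv : Function.Involutive e := by
    intro ε; funext i; simp [he]
  have himg : ∀ ε : Fin m → Bool,
      (fun x => (1 / (m : ℝ)) * ∑ i, (if ε i then (1:ℝ) else -1) * x i) '' (F ∪ {w})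
        = insert (feps m ε w) (feps m ε '' F) := by
    intro ε
    rw [Set.image_union, Set.image_singleton, Set.union_comm, Set.singleton_union]
    rfl
  have hFimg : ∀ ε, (feps m ε '' F).Nonempty := fun ε => hF.image _
  have hbdd : ∀ ε, BddAbove (feps m ε '' F) := fun ε => feps_bdd m ε hFb
  have hsup : ∀ ε : Fin m → Bool,
      sSup ((fun x => (1 / (m : ℝ)) * ∑ i, (if ε i then (1:ℝ) else -1) * x i) '' (F ∪ {w}))
        = max (feps m ε w) (S ε) := by
    intro ε
    rw [himg ε, csSup_insert (hbdd ε) (hFimg ε)]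
  have hradF : radComp m F = ((2:ℝ)^m)⁻¹ * ∑ ε : Fin m → Bool, S ε := rfl
  have hradU : radComp m (F ∪ {w})
      = ((2:ℝ)^m)⁻¹ * ∑ ε : Fin m → Bool, max (feps m ε w) (S ε) := by
    unfold radComp
    rw [Finset.sum_congr rfl (fun ε _ => hsup ε)]
  have hinvnn : (0:ℝ) ≤ ((2:ℝ)^m)⁻¹ := by positivity
  -- key pointwise facts
  have hab : ∀ ε, 0 ≤ S ε + S (e ε) := by
    intro ε
    obtain ⟨x0, hx0⟩ := hF
    have h1 : feps m ε x0 ≤ S ε := le_csSup (hbdd ε) ⟨x0, hx0, rfl⟩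
    have h2 : feps m (e ε) x0 ≤ S (e ε) := le_csSup (hbdd (e ε)) ⟨x0, hx0, rfl⟩
    have h3 : feps m (e ε) x0 = - feps m ε x0 := feps_neg m ε x0
    linarith
  have hxle : ∀ ε, feps m ε w ≤ (1 + lam) * S ε + lam * S (e ε) := by
    intro ε
    have hlin := feps_linear m ε
    have hmap : feps m ε w = (1 + lam) * feps m ε u - lam * feps m ε v := by
      rw [hw, sub_eq_add_neg, ← neg_smul, hlin.map_add, hlin.map_smul, hlin.map_smul]
      simp only [smul_eq_mul]
      ring
    have hfu : feps m ε u ≤ S ε := feps_convexHull_le m ε hFb hu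
    have hfv : feps m (e ε) v ≤ S (e ε) := feps_convexHull_le m (e ε) hFb hv
    have hfv' : feps m (e ε) v = - feps m ε v := feps_neg m ε v
    nlinarith [mul_le_mul_of_nonneg_left hfu (by linarith : (0:ℝ) ≤ 1 + lam),
      mul_le_mul_of_nonneg_left hfv hlam]
  have hxneg : ∀ ε, feps m (e ε) w = - feps m ε w := fun ε => feps_neg m ε w
  -- pairing
  have hkey : ∀ ε, max (feps m ε w) (S ε) + max (feps m (e ε) w) (S (e ε))
      ≤ (1 + lam) * (S ε + S (e ε)) := by
    intro ε
    rw [hxneg ε]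
    refine aux_max (S ε) (S (e ε)) (feps m ε w) lam hlam (hab ε) (hxle ε) ?_
    have := hxle (e ε)
    rw [hxneg ε, heinv ε] at this
    linarith
  have hresum : ∀ g : (Fin m → Bool) → ℝ,
      (∑ ε : Fin m → Bool, g (e ε)) = ∑ ε : Fin m → Bool, g ε := by
    intro g
    exact Fintype.sum_bijective e heinv.bijective _ _ (fun ε => rfl)
  have hsum : (∑ ε : Fin m → Bool, max (feps m ε w) (S ε))
      ≤ (1 + lam) * ∑ ε : Fin m → Bool, S ε := by
    have h2 : (2:ℝ) * ∑ ε : Fin m → Bool, max (feps m ε w) (S ε)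
        = ∑ ε : Fin m → Bool, (max (feps m ε w) (S ε)
            + max (feps m (e ε) w) (S (e ε))) := by
      rw [Finset.sum_add_distrib, hresum (fun ε => max (feps m ε w) (S ε))]
      ring
    have h3 : (∑ ε : Fin m → Bool, (max (feps m ε w) (S ε)
            + max (feps m (e ε) w) (S (e ε))))
        ≤ ∑ ε : Fin m → Bool, (1 + lam) * (S ε + S (e ε)) :=
      Finset.sum_le_sum (fun ε _ => hkey ε)
    have h4 : (∑ ε : Fin m → Bool, (1 + lam) * (S ε + S (e ε)))
        = (2:ℝ) * ((1 + lam) * ∑ ε : Fin m → Bool, S ε) := by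
      rw [← Finset.mul_sum, Finset.sum_add_distrib, hresum S]
      ring
    linarith
  constructor
  · rw [hradF, hradU]
    refine mul_le_mul_of_nonneg_left (Finset.sum_le_sum fun ε _ => ?_) hinvnn
    exact le_max_right _ _
  · rw [hradF, hradU]
    calc ((2:ℝ)^m)⁻¹ * ∑ ε : Fin m → Bool, max (feps m ε w) (S ε)
        ≤ ((2:ℝ)^m)⁻¹ * ((1 + lam) * ∑ ε : Fin m → Bool, S ε) :=
          mul_le_mul_of_nonneg_left hsum hinvnn
      _ = (1 + lam) * (((2:ℝ)^m)⁻¹ * ∑ ε : Fin m → Bool, S ε) := by ring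
end

section
/- Let Z be a measurable space, D a probability measure on Z, m ≥ 1, and 𝒢 a nonempty countable class of measurable functions Z → ℝ that is uniformly bounded. Let λ ≥ 0 and let g₀ : Z → ℝ satisfy g₀ = (1+λ)·g₁ − λ·g₂ pointwise, where g₁ and g₂ are finite convex combinations of functions in 𝒢. Then R_D(𝒢) ≤ R_D(𝒢 ∪ {g₀}) ≤ (1+λ)·R_D(𝒢). (Expected-complexity form of Theorem 1.) -/
open Finset MeasureTheory

/-- Empirical Rademacher complexity of a function class `G` on the sample `S`. -/
noncomputable def empRad {Z : Type*} (m : ℕ) (S : Fin m → Z) (G : Set (Z → ℝ)) : ℝ :=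
  radComp m ((fun g => fun i => g (S i)) '' G)

/-- Expected Rademacher complexity `R_D(G) = E_{S ∼ D^m}[R̂_S(G)]`. -/
noncomputable def expRad {Z : Type*} [MeasurableSpace Z] (m : ℕ) (D : Measure Z)
    (G : Set (Z → ℝ)) : ℝ :=
  ∫ S, empRad m S G ∂(Measure.pi fun _ : Fin m => D)

/-!
For a sign vector `ε` let `s ε` be the supremum over `A` of the signed average and `t ε` the
signed average of `a₀ = (1 + λ) a₁ - λ a₂`. Since `a₁, a₂` lie in the convex hull of `A`,
`t ε ≤ (1 + λ) s ε + λ s (-ε)`, while `t (-ε) = -t ε`. Pairing `ε` with `-ε` gives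
`max (s ε) (t ε) + max (s (-ε)) (t (-ε)) ≤ (1 + λ) (s ε + s (-ε))`, and summing over all `ε`
bounds the empirical complexity of `A ∪ {a₀}` by `(1 + λ)` times that of `A`. Boundedness and
countability of the class make the empirical complexities integrable, so the bound passes to
the expectation.
-/

def boolSign (b : Bool) : ℝ := if b then 1 else -1

theorem boolSign_not (b : Bool) : boolSign (!b) = -boolSign b := by
  cases b <;> simp [boolSign]

theorem abs_boolSign (b : Bool) : |boolSign b| = 1 := by
  cases b <;> simp [boolSign]

theorem max_add_max_neg_le {s₁ s₂ t lam : ℝ} (hlam : 0 ≤ lam)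
    (h₁ : t ≤ (1 + lam) * s₁ + lam * s₂) (h₂ : -t ≤ (1 + lam) * s₂ + lam * s₁) :
    max s₁ t + max s₂ (-t) ≤ (1 + lam) * (s₁ + s₂) := by
  have hs : 0 ≤ s₁ + s₂ := by nlinarith
  simp only [max_add, add_max, max_le_iff]
  refine ⟨⟨?_, ?_⟩, ?_, ?_⟩ <;> nlinarith

theorem sum_max_le_of_involutive {ι : Type*} [Fintype ι] {ν : ι → ι}
    (hν : Function.Involutive ν) {s t : ι → ℝ} {lam : ℝ} (hlam : 0 ≤ lam)
    (ht : ∀ i, t (ν i) = -t i) (hts : ∀ i, t i ≤ (1 + lam) * s i + lam * s (ν i)) :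
    ∑ i, max (s i) (t i) ≤ (1 + lam) * ∑ i, s i := by
  have hperm (f : ι → ℝ) : ∑ i, f (ν i) = ∑ i, f i := Equiv.sum_comp (hν.toPerm ν) f
  have hpair (i : ι) :
      max (s i) (t i) + max (s (ν i)) (t (ν i)) ≤ (1 + lam) * (s i + s (ν i)) := by
    have h₂ := hts (ν i)
    rw [hν i, ht i] at h₂
    rw [ht i]
    exact max_add_max_neg_le hlam (hts i) h₂
  have hsum := Finset.sum_le_sum fun i (_ : i ∈ Finset.univ) => hpair i
  rw [Finset.sum_add_distrib, ← Finset.mul_sum, Finset.sum_add_distrib,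
    hperm fun i => max (s i) (t i), hperm s] at hsum
  linarith

theorem abs_affine_le {x y C lam : ℝ} (hlam : 0 ≤ lam) (hx : |x| ≤ C) (hy : |y| ≤ C) :
    |(1 + lam) * x - lam * y| ≤ (1 + 2 * lam) * C := by
  rw [abs_le] at *
  constructor <;> nlinarith

noncomputable def signedAvg (m : ℕ) (ε : Fin m → Bool) (v : Fin m → ℝ) : ℝ :=
  (1 / (m : ℝ)) * ∑ i, boolSign (ε i) * v i

def flipSigns {m : ℕ} (ε : Fin m → Bool) : Fin m → Bool := fun i => !ε i

section RadComp

variable {m : ℕ}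

theorem flipSigns_involutive : Function.Involutive (@flipSigns m) :=
  fun ε => funext fun i => Bool.not_not (ε i)

theorem signedAvg_flipSigns (ε : Fin m → Bool) (v : Fin m → ℝ) :
    signedAvg m (flipSigns ε) v = -signedAvg m ε v := by
  simp only [signedAvg, flipSigns, boolSign_not, neg_mul, Finset.sum_neg_distrib, mul_neg]

theorem isLinearMap_signedAvg (ε : Fin m → Bool) : IsLinearMap ℝ (signedAvg m ε) where
  map_add v w := by simp only [signedAvg, Pi.add_apply, mul_add, Finset.sum_add_distrib]
  map_smul c v := by
    simp only [signedAvg, Pi.smul_apply, smul_eq_mul, Finset.mul_sum]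
    exact Finset.sum_congr rfl fun i _ => by ring

theorem abs_signedAvg_le_norm (ε : Fin m → Bool) (v : Fin m → ℝ) :
    |signedAvg m ε v| ≤ ‖v‖ := by
  have hsum : |∑ i, boolSign (ε i) * v i| ≤ m * ‖v‖ :=
    calc |∑ i, boolSign (ε i) * v i|
        ≤ ∑ i : Fin m, ‖v‖ := by
          refine (Finset.abs_sum_le_sum_abs _ _).trans (Finset.sum_le_sum fun i _ => ?_)
          rw [abs_mul, abs_boolSign, one_mul, ← Real.norm_eq_abs]
          exact norm_le_pi_norm v i
      _ = m * ‖v‖ := by simp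
  rcases Nat.eq_zero_or_pos m with rfl | hm
  · simp [signedAvg]
  · rw [signedAvg, abs_mul, abs_of_pos (by positivity), one_div, inv_mul_le_iff₀ (by positivity)]
    exact hsum

theorem radComp_eq (A : Set (Fin m → ℝ)) :
    radComp m A = ((2 : ℝ) ^ m)⁻¹ * ∑ ε, sSup (signedAvg m ε '' A) := rfl

variable {A : Set (Fin m → ℝ)}

theorem bddAbove_signedAvg_image (hA : Bornology.IsBounded A) (ε : Fin m → Bool) :
    BddAbove (signedAvg m ε '' A) := by
  obtain ⟨C, hC⟩ := isBounded_iff_forall_norm_le.1 hA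
  refine ⟨C, ?_⟩
  rintro _ ⟨v, hv, rfl⟩
  exact (le_abs_self _).trans ((abs_signedAvg_le_norm ε v).trans (hC v hv))

theorem signedAvg_le_sSup_of_mem_convexHull (hA : Bornology.IsBounded A) (ε : Fin m → Bool)
    {a : Fin m → ℝ} (ha : a ∈ convexHull ℝ A) :
    signedAvg m ε a ≤ sSup (signedAvg m ε '' A) :=
  convexHull_min (fun v hv => le_csSup (bddAbove_signedAvg_image hA ε) ⟨v, hv, rfl⟩)
    (convex_halfSpace_le (isLinearMap_signedAvg ε) _) ha

theorem abs_radComp_le (hA : A.Nonempty) {C : ℝ} (hC : ∀ v ∈ A, ‖v‖ ≤ C) :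
    |radComp m A| ≤ C := by
  have hterm : ∀ ε, |sSup (signedAvg m ε '' A)| ≤ C := fun ε => by
    refine abs_le.2 ⟨?_, csSup_le (hA.image _) ?_⟩
    · obtain ⟨v, hv⟩ := hA
      have hbdd : BddAbove (signedAvg m ε '' A) :=
        bddAbove_signedAvg_image (isBounded_iff_forall_norm_le.2 ⟨C, hC⟩) ε
      exact (neg_le_of_abs_le ((abs_signedAvg_le_norm ε v).trans (hC v hv))).trans
        (le_csSup hbdd ⟨v, hv, rfl⟩)
    · rintro _ ⟨v, hv, rfl⟩
      exact (le_abs_self _).trans ((abs_signedAvg_le_norm ε v).trans (hC v hv))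
  calc |radComp m A| ≤ ((2 : ℝ) ^ m)⁻¹ * ∑ _ε : Fin m → Bool, C := by
        rw [radComp_eq, abs_mul, abs_of_pos (by positivity)]
        gcongr
        exact (Finset.abs_sum_le_sum_abs _ _).trans (Finset.sum_le_sum fun ε _ => hterm ε)
    _ = C := by simp

theorem radComp_mono {B : Set (Fin m → ℝ)} (hA : A.Nonempty) (hB : Bornology.IsBounded B)
    (hAB : A ⊆ B) : radComp m A ≤ radComp m B := by
  rw [radComp_eq, radComp_eq]
  refine mul_le_mul_of_nonneg_left (Finset.sum_le_sum fun ε _ => ?_) (by positivity)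
  exact csSup_le_csSup (bddAbove_signedAvg_image hB ε) (hA.image _) (Set.image_mono hAB)

theorem signedAvg_affine (ε : Fin m → Bool) (lam : ℝ) (a₁ a₂ : Fin m → ℝ) :
    signedAvg m ε ((1 + lam) • a₁ - lam • a₂) =
      (1 + lam) * signedAvg m ε a₁ - lam * signedAvg m ε a₂ := by
  simp only [(isLinearMap_signedAvg ε).map_sub, (isLinearMap_signedAvg ε).map_smul, smul_eq_mul]

theorem radComp_union_affine_le (hA : A.Nonempty) (hAb : Bornology.IsBounded A)
    {lam : ℝ} (hlam : 0 ≤ lam) {a₁ a₂ : Fin m → ℝ} (ha₁ : a₁ ∈ convexHull ℝ A)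
    (ha₂ : a₂ ∈ convexHull ℝ A) :
    radComp m (A ∪ {(1 + lam) • a₁ - lam • a₂}) ≤ (1 + lam) * radComp m A := by
  set s : (Fin m → Bool) → ℝ := fun ε => sSup (signedAvg m ε '' A)
  set t : (Fin m → Bool) → ℝ := fun ε => signedAvg m ε ((1 + lam) • a₁ - lam • a₂)
  have hsup (ε : Fin m → Bool) :
      sSup (signedAvg m ε '' (A ∪ {(1 + lam) • a₁ - lam • a₂})) = max (s ε) (t ε) := by
    rw [Set.image_union, Set.image_singleton, csSup_union (bddAbove_signedAvg_image hAb ε)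
      (hA.image _) bddAbove_singleton (Set.singleton_nonempty _), csSup_singleton]
  have hts (ε : Fin m → Bool) : t ε ≤ (1 + lam) * s ε + lam * s (flipSigns ε) := by
    have h₁ := signedAvg_le_sSup_of_mem_convexHull hAb ε ha₁
    have h₂ := signedAvg_le_sSup_of_mem_convexHull hAb (flipSigns ε) ha₂
    rw [signedAvg_flipSigns] at h₂
    simp only [t, signedAvg_affine]
    nlinarith
  rw [radComp_eq, radComp_eq, mul_left_comm]
  gcongr
  simp only [hsup]
  exact sum_max_le_of_involutive flipSigns_involutive hlam
    (fun ε => signedAvg_flipSigns ε _) hts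

end RadComp

section FunctionClass

variable {Z : Type*} {G : Set (Z → ℝ)} {C : ℝ}

theorem abs_le_of_mem_convexHull (hGb : ∀ g ∈ G, ∀ z, |g z| ≤ C) {g : Z → ℝ}
    (hg : g ∈ convexHull ℝ G) (z : Z) : |g z| ≤ C := by
  have hball : Convex ℝ ((LinearMap.proj z : (Z → ℝ) →ₗ[ℝ] ℝ) ⁻¹' Metric.closedBall 0 C) :=
    (convex_closedBall 0 C).linear_preimage _
  simpa using convexHull_min (fun f hf => by simpa using hGb f hf z) hball hg

theorem measurable_of_mem_convexHull [MeasurableSpace Z] (hGm : ∀ g ∈ G, Measurable g)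
    {g : Z → ℝ} (hg : g ∈ convexHull ℝ G) : Measurable g := by
  refine convexHull_min hGm (fun f hf f' hf' a b _ _ _ => ?_) hg
  exact (Measurable.const_smul hf a).add (Measurable.const_smul hf' b)

variable {m : ℕ}

theorem norm_sample_le (hC : 0 ≤ C) (hGb : ∀ g ∈ G, ∀ z, |g z| ≤ C) (S : Fin m → Z) :
    ∀ v ∈ (fun g i => g (S i)) '' G, ‖v‖ ≤ C := by
  rintro _ ⟨g, hg, rfl⟩
  exact (pi_norm_le_iff_of_nonneg hC).2 fun i => (Real.norm_eq_abs _).trans_le (hGb g hg _)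

theorem isBounded_sample_image (hC : 0 ≤ C) (hGb : ∀ g ∈ G, ∀ z, |g z| ≤ C)
    (S : Fin m → Z) : Bornology.IsBounded ((fun g i => g (S i)) '' G) :=
  isBounded_iff_forall_norm_le.2 ⟨C, norm_sample_le hC hGb S⟩

theorem abs_empRad_le (hG : G.Nonempty) (hC : 0 ≤ C) (hGb : ∀ g ∈ G, ∀ z, |g z| ≤ C)
    (S : Fin m → Z) : |empRad m S G| ≤ C :=
  abs_radComp_le (hG.image _) (norm_sample_le hC hGb S)

theorem empRad_le_empRad_union (hG : G.Nonempty) (hC : 0 ≤ C)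
    (hGb : ∀ g ∈ G, ∀ z, |g z| ≤ C) (g₀ : Z → ℝ) (S : Fin m → Z) :
    empRad m S G ≤ empRad m S (G ∪ {g₀}) := by
  refine radComp_mono (hG.image _) ?_ (Set.image_mono Set.subset_union_left)
  rw [Set.image_union, Set.image_singleton]
  exact (isBounded_sample_image hC hGb S).union Bornology.isBounded_singleton

theorem empRad_union_affine_le (hG : G.Nonempty) (hC : 0 ≤ C)
    (hGb : ∀ g ∈ G, ∀ z, |g z| ≤ C) {lam : ℝ} (hlam : 0 ≤ lam) {g₁ g₂ : Z → ℝ}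
    (hg₁ : g₁ ∈ convexHull ℝ G) (hg₂ : g₂ ∈ convexHull ℝ G) (S : Fin m → Z) :
    empRad m S (G ∪ {(1 + lam) • g₁ - lam • g₂}) ≤ (1 + lam) * empRad m S G := by
  have hsample : ∀ g ∈ convexHull ℝ G,
      (fun i => g (S i)) ∈ convexHull ℝ ((fun g i => g (S i)) '' G) := fun g hg =>
    (LinearMap.image_convexHull (LinearMap.funLeft ℝ ℝ S) G).subset (Set.mem_image_of_mem _ hg)
  rw [empRad, Set.image_union, Set.image_singleton]
  exact radComp_union_affine_le (hG.image _) (isBounded_sample_image hC hGb S) hlam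
    (hsample g₁ hg₁) (hsample g₂ hg₂)

variable [MeasurableSpace Z]

theorem measurable_empRad (hGc : G.Countable) (hGm : ∀ g ∈ G, Measurable g) :
    Measurable fun S : Fin m → Z => empRad m S G := by
  have : Countable G := hGc.to_subtype
  simp only [empRad, radComp_eq, Set.image_image, sSup_image']
  refine (Finset.measurable_sum _ fun ε _ => Measurable.iSup fun g => ?_).const_mul _
  have hg := hGm g g.2
  simp only [signedAvg]
  fun_prop

theorem integrable_empRad (D : Measure Z) [IsFiniteMeasure D] (hG : G.Nonempty)
    (hGc : G.Countable) (hGm : ∀ g ∈ G, Measurable g) (hC : 0 ≤ C)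
    (hGb : ∀ g ∈ G, ∀ z, |g z| ≤ C) :
    Integrable (fun S : Fin m → Z => empRad m S G) (Measure.pi fun _ => D) :=
  Integrable.of_bound (measurable_empRad hGc hGm).aestronglyMeasurable C
    (ae_of_all _ fun S => (Real.norm_eq_abs _).trans_le (abs_empRad_le hG hC hGb S))

end FunctionClass

theorem stmt1_general {Z : Type*} [MeasurableSpace Z] (D : Measure Z) [IsProbabilityMeasure D]
    (m : ℕ) (G : Set (Z → ℝ)) (hG : G.Nonempty) (hGc : G.Countable)
    (hGm : ∀ g ∈ G, Measurable g) (C : ℝ) (hGb : ∀ g ∈ G, ∀ z, |g z| ≤ C)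
    (lam : ℝ) (hlam : 0 ≤ lam) (g₀ g₁ g₂ : Z → ℝ)
    (hg₁ : g₁ ∈ convexHull ℝ G) (hg₂ : g₂ ∈ convexHull ℝ G)
    (hg₀ : ∀ z, g₀ z = (1 + lam) * g₁ z - lam * g₂ z) :
    expRad m D G ≤ expRad m D (G ∪ {g₀}) ∧
      expRad m D (G ∪ {g₀}) ≤ (1 + lam) * expRad m D G := by
  have hZ : Nonempty Z := D.nonempty_of_neZero
  have hC : 0 ≤ C := (abs_nonneg _).trans (hGb _ hG.some_mem hZ.some)
  obtain rfl : g₀ = (1 + lam) • g₁ - lam • g₂ := funext fun z => by simp [hg₀]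
  have hGm' : ∀ g ∈ G ∪ {(1 + lam) • g₁ - lam • g₂}, Measurable g := by
    rintro g (hg | rfl)
    · exact hGm g hg
    · exact ((measurable_of_mem_convexHull hGm hg₁).const_smul _).sub
        ((measurable_of_mem_convexHull hGm hg₂).const_smul _)
  have hGb' : ∀ g ∈ G ∪ {(1 + lam) • g₁ - lam • g₂}, ∀ z, |g z| ≤ (1 + 2 * lam) * C := by
    rintro g (hg | rfl) z
    · exact (hGb g hg z).trans (by nlinarith)
    · exact abs_affine_le hlam (abs_le_of_mem_convexHull hGb hg₁ z)
        (abs_le_of_mem_convexHull hGb hg₂ z)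
  have hint := integrable_empRad (m := m) D hG hGc hGm hC hGb
  have hint' := integrable_empRad (m := m) D (hG.mono Set.subset_union_left)
    (hGc.union (Set.countable_singleton _)) hGm' (by positivity) hGb'
  refine ⟨integral_mono hint hint' fun S => empRad_le_empRad_union hG hC hGb _ S, ?_⟩
  calc expRad m D (G ∪ {(1 + lam) • g₁ - lam • g₂})
      ≤ ∫ S, (1 + lam) * empRad m S G ∂(Measure.pi fun _ => D) :=
        integral_mono hint' (hint.const_mul _) (empRad_union_affine_le hG hC hGb hlam hg₁ hg₂)
    _ = (1 + lam) * expRad m D G := integral_const_mul _ _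

theorem stmt1 {Z : Type*} [MeasurableSpace Z] (D : Measure Z) [IsProbabilityMeasure D]
    (m : ℕ) (hm : 1 ≤ m) (G : Set (Z → ℝ)) (hG : G.Nonempty) (hGc : G.Countable)
    (hGm : ∀ g ∈ G, Measurable g) (C : ℝ) (hGb : ∀ g ∈ G, ∀ z, |g z| ≤ C)
    (lam : ℝ) (hlam : 0 ≤ lam) (g₀ g₁ g₂ : Z → ℝ)
    (hg₁ : g₁ ∈ convexHull ℝ G) (hg₂ : g₂ ∈ convexHull ℝ G)
    (hg₀ : ∀ z, g₀ z = (1 + lam) * g₁ z - lam * g₂ z) :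
    expRad m D G ≤ expRad m D (G ∪ {g₀}) ∧
      expRad m D (G ∪ {g₀}) ≤ (1 + lam) * expRad m D G :=
  stmt1_general D m G hG hGc hGm C hGb lam hlam g₀ g₁ g₂ hg₁ hg₂ hg₀
end

section
/- Let m ≥ 1, let F be a nonempty bounded subset of ℝ^m, and let w ∈ ℝ^m. Define A := {ε ∈ {-1,1}^m : ⟨ε, w⟩ > sup_{v ∈ F} ⟨ε, v⟩}. Then Σ_{ε ∈ A} sup_{v ∈ F} ⟨ε, v⟩ + Σ_{ε ∈ −A} sup_{v ∈ F} ⟨ε, v⟩ ≤ Σ_{ε ∈ {-1,1}^m} sup_{v ∈ F} ⟨ε, v⟩. -/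
open Finset

/-- `sup_{v ∈ F} ⟨ε, v⟩` where `⟨·,·⟩` is the standard inner product on `ℝ^m`. -/
noncomputable def supIP (m : ℕ) (F : Set (Fin m → ℝ)) (ε : Fin m → ℝ) : ℝ :=
  sSup ((fun v => ∑ i, ε i * v i) '' F)

/-- The set of sign vectors `{-1,1}^m ⊆ ℝ^m`, as a finset. -/
noncomputable def signVecs (m : ℕ) : Finset (Fin m → ℝ) :=
  Finset.image (fun b : Fin m → Bool => fun i => if b i then (1 : ℝ) else -1)
    Finset.univ

lemma neg_mem_signVecs {m : ℕ} {ε : Fin m → ℝ} (h : ε ∈ signVecs m) :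
    -ε ∈ signVecs m := by
  simp only [signVecs, Finset.mem_image, Finset.mem_univ, true_and] at h ⊢
  obtain ⟨b, rfl⟩ := h
  exact ⟨fun i => !(b i), by funext i; cases hb : b i <;> simp [hb]⟩

lemma bddAbove_ip {m : ℕ} {F : Set (Fin m → ℝ)} (hFb : Bornology.IsBounded F)
    (ε : Fin m → ℝ) : BddAbove ((fun v => ∑ i, ε i * v i) '' F) := by
  obtain ⟨C, hC⟩ := hFb.exists_norm_le
  refine ⟨(∑ i, |ε i|) * C, ?_⟩
  rintro x ⟨v, hv, rfl⟩
  calc ∑ i, ε i * v i ≤ ∑ i, |ε i| * C := by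
        refine Finset.sum_le_sum fun i _ => ?_
        calc ε i * v i ≤ |ε i * v i| := le_abs_self _
          _ = |ε i| * |v i| := abs_mul _ _
          _ ≤ |ε i| * C := by
              refine mul_le_mul_of_nonneg_left ?_ (abs_nonneg _)
              exact (norm_le_pi_norm v i).trans (hC v hv)
    _ = (∑ i, |ε i|) * C := by rw [Finset.sum_mul]
lemma le_supIP {m : ℕ} {F : Set (Fin m → ℝ)} (hFb : Bornology.IsBounded F)
    {v : Fin m → ℝ} (hv : v ∈ F) (ε : Fin m → ℝ) :
    ∑ i, ε i * v i ≤ supIP m F ε :=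
  le_csSup (bddAbove_ip hFb ε) ⟨v, hv, rfl⟩

lemma supIP_add_neg_nonneg {m : ℕ} {F : Set (Fin m → ℝ)} (hF : F.Nonempty)
    (hFb : Bornology.IsBounded F) (ε : Fin m → ℝ) :
    0 ≤ supIP m F ε + supIP m F (-ε) := by
  obtain ⟨v, hv⟩ := hF
  have h1 := le_supIP hFb hv ε
  have h2 := le_supIP hFb hv (-ε)
  have : ∑ i, (-ε) i * v i = -∑ i, ε i * v i := by
    rw [← Finset.sum_neg_distrib]; congr 1; funext i; simp
  linarith [this ▸ h2]

theorem stmt3 (m : ℕ) (hm : 1 ≤ m) (F : Set (Fin m → ℝ)) (hF : F.Nonempty)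
    (hFb : Bornology.IsBounded F) (w : Fin m → ℝ)
    (A : Finset (Fin m → ℝ))
    (hA : A = (signVecs m).filter (fun ε => supIP m F ε < ∑ i, ε i * w i)) :
    ∑ ε ∈ A, supIP m F ε + ∑ ε ∈ A.image (fun ε => -ε), supIP m F ε ≤
      ∑ ε ∈ signVecs m, supIP m F ε := by
  set B := A.image (fun ε => -ε) with hB
  have hAsub : A ⊆ signVecs m := by rw [hA]; exact Finset.filter_subset _ _
  have hAmem : ∀ ε ∈ A, supIP m F ε < ∑ i, ε i * w i := by
    intro ε hε; rw [hA] at hε; exact (Finset.mem_filter.mp hε).2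
  have hBsub : B ⊆ signVecs m := by
    intro x hx
    obtain ⟨a, ha, rfl⟩ := Finset.mem_image.mp hx
    exact neg_mem_signVecs (hAsub ha)
  obtain ⟨v0, hv0⟩ := hF
  have key : ∀ ε, ε ∈ A → -ε ∉ A := by
    intro ε hε hnε
    have h1 := hAmem ε hε
    have h2 := hAmem (-ε) hnε
    have g1 := le_supIP hFb hv0 ε
    have g2 := le_supIP hFb hv0 (-ε)
    have e1 : ∑ i, (-ε) i * v0 i = -∑ i, ε i * v0 i := by
      rw [← Finset.sum_neg_distrib]; congr 1; funext i; simp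
    have e2 : ∑ i, (-ε) i * w i = -∑ i, ε i * w i := by
      rw [← Finset.sum_neg_distrib]; congr 1; funext i; simp
    rw [e1] at g2
    rw [e2] at h2
    linarith
  have hdisj : Disjoint A B := by
    rw [Finset.disjoint_right]
    intro x hx hxA
    obtain ⟨a, ha, rfl⟩ := Finset.mem_image.mp hx
    exact key a ha (by simpa using hxA)
  have hsum : ∑ ε ∈ A, supIP m F ε + ∑ ε ∈ B, supIP m F ε
      = ∑ ε ∈ A ∪ B, supIP m F ε := (Finset.sum_union hdisj).symm
  rw [hsum]
  have hUsub : A ∪ B ⊆ signVecs m := Finset.union_subset hAsub hBsub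
  rw [← Finset.sum_sdiff hUsub]
  set R := signVecs m \ (A ∪ B) with hR
  have hRneg : ∀ ε ∈ R, -ε ∈ R := by
    intro ε hε
    rw [hR, Finset.mem_sdiff] at hε ⊢
    obtain ⟨hεS, hεU⟩ := hε
    rw [Finset.mem_union, not_or] at hεU
    refine ⟨neg_mem_signVecs hεS, ?_⟩
    rw [Finset.mem_union, not_or]
    constructor
    · intro h
      exact hεU.2 (Finset.mem_image.mpr ⟨-ε, h, by simp⟩)
    · intro h
      obtain ⟨a, ha, hae⟩ := Finset.mem_image.mp h
      have : ε = a := by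
        have := congrArg Neg.neg hae; simpa using this.symm
      exact hεU.1 (this ▸ ha)
  have hRflip : ∑ ε ∈ R, supIP m F ε = ∑ ε ∈ R, supIP m F (-ε) := by
    refine Finset.sum_nbij' (fun ε => -ε) (fun ε => -ε) ?_ ?_ ?_ ?_ ?_
    · exact fun ε hε => hRneg ε hε
    · exact fun ε hε => hRneg ε hε
    · intro ε _; simp
    · intro ε _; simp
    · intro ε _; simp
  have hRnonneg : 0 ≤ ∑ ε ∈ R, supIP m F ε := by
    have h2 : 2 * ∑ ε ∈ R, supIP m F ε
        = ∑ ε ∈ R, (supIP m F ε + supIP m F (-ε)) := by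
      rw [Finset.sum_add_distrib, ← hRflip]; ring
    have hpos : 0 ≤ ∑ ε ∈ R, (supIP m F ε + supIP m F (-ε)) :=
      Finset.sum_nonneg fun ε _ => supIP_add_neg_nonneg ⟨v0, hv0⟩ hFb ε
    linarith
  linarith
end

section
/- Let m ≥ 1, let A be a nonempty bounded subset of ℝ^m, let L ≥ 0, and let φ : ℝ → ℝ be L-Lipschitz with φ(0) = 0. Then R̂(φ∘A) ≤ L·R̂(A), where φ∘A := {(φ(v₁), …, φ(v_m)) : (v₁, …, v_m) ∈ A}. (Contraction property of the empirical Rademacher complexity.) -/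
open Finset

/-- Auxiliary: if everything in `S` plus everything in `T` is `≤ C`, then the sups add up. -/
lemma aux_sSup_add_sSup_le {S T : Set ℝ} (hS : S.Nonempty) (hT : T.Nonempty) {C : ℝ}
    (h : ∀ s ∈ S, ∀ t ∈ T, s + t ≤ C) : sSup S + sSup T ≤ C := by
  have h1 : sSup S ≤ C - sSup T := by
    apply csSup_le hS
    intro s hs
    have h2 : sSup T ≤ C - s := csSup_le hT (fun t ht => by linarith [h s hs t ht])
    linarith
  linarith

lemma aux_bddAbove_image {α : Type*} {A : Set α} {f : α → ℝ} {B : ℝ}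
    (h : ∀ v ∈ A, f v ≤ B) : BddAbove (f '' A) :=
  ⟨B, by rintro y ⟨v, hv, rfl⟩; exact h v hv⟩

/-- Pulling a nonnegative constant out of a supremum. -/
lemma aux_sSup_const_mul {c : ℝ} (hc : 0 ≤ c) {S : Set ℝ} (hS : S.Nonempty)
    (hSb : BddAbove S) : sSup ((fun x => c * x) '' S) = c * sSup S := by
  rcases hc.eq_or_lt with h | h
  · have him : (fun x => c * x) '' S = {0} := by
      rw [← h]
      ext y
      simp only [Set.mem_image, Set.mem_singleton_iff]
      constructor
      · rintro ⟨x, _, rfl⟩; ring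
      · rintro rfl; exact ⟨hS.choose, hS.choose_spec, by ring⟩
    rw [him, ← h, csSup_singleton]; ring
  · apply le_antisymm
    · apply csSup_le (hS.image _)
      rintro y ⟨x, hx, rfl⟩
      exact mul_le_mul_of_nonneg_left (le_csSup hSb hx) hc
    · have hb : BddAbove ((fun x => c * x) '' S) :=
        ⟨c * sSup S, by
          rintro y ⟨x, hx, rfl⟩
          exact mul_le_mul_of_nonneg_left (le_csSup hSb hx) hc⟩
      have h1 : sSup S ≤ sSup ((fun x => c * x) '' S) / c := by
        apply csSup_le hS
        intro x hx
        rw [le_div_iff₀ h, mul_comm]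
        exact le_csSup hb ⟨x, hx, rfl⟩
      calc c * sSup S ≤ c * (sSup ((fun x => c * x) '' S) / c) :=
            mul_le_mul_of_nonneg_left h1 hc
        _ = sSup ((fun x => c * x) '' S) := by field_simp

/-- The interpolating family of coordinate functions: coordinates `< k` already
replaced by the linear function, the rest still carry `φ`. -/
noncomputable def ctrFam (m : ℕ) (L : ℝ) (φ : ℝ → ℝ) (k : ℕ) (i : Fin m) : ℝ → ℝ :=
  if (i : ℕ) < k then (fun x => (L / m) * x) else (fun x => (1 / m) * φ x)

/-- The summand function for a given sign pattern. -/
noncomputable def ctrP (m : ℕ) (L : ℝ) (φ : ℝ → ℝ) (k : ℕ) (ε : Fin m → Bool)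
    (v : Fin m → ℝ) : ℝ :=
  ∑ i, (if ε i then (1 : ℝ) else -1) * ctrFam m L φ k i (v i)

/-- The (unnormalized) interpolated Rademacher sum. -/
noncomputable def ctrG (m : ℕ) (L : ℝ) (φ : ℝ → ℝ) (A : Set (Fin m → ℝ)) (k : ℕ) : ℝ :=
  ∑ ε : Fin m → Bool, sSup (ctrP m L φ k ε '' A)

section ctr

variable {m : ℕ} {L R : ℝ} {φ : ℝ → ℝ} {A : Set (Fin m → ℝ)}

lemma ctrFam_abs (hm : 1 ≤ m) (hL : 0 ≤ L) (hφ : ∀ x y, |φ x - φ y| ≤ L * |x - y|)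
    (hφ0 : φ 0 = 0) (k : ℕ) (i : Fin m) (x : ℝ) :
    |ctrFam m L φ k i x| ≤ (L / m) * |x| := by
  have hm0 : (0 : ℝ) < m := by exact_mod_cast hm
  unfold ctrFam
  split_ifs
  · rw [abs_mul, abs_of_nonneg (by positivity : (0:ℝ) ≤ L / m)]
  · rw [abs_mul, abs_of_nonneg (by positivity : (0:ℝ) ≤ 1 / (m:ℝ))]
    have h1 : |φ x| ≤ L * |x| := by
      have := hφ x 0
      simpa [hφ0] using this
    calc (1 / (m:ℝ)) * |φ x| ≤ (1 / (m:ℝ)) * (L * |x|) :=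
          mul_le_mul_of_nonneg_left h1 (by positivity)
      _ = (L / m) * |x| := by ring

lemma ctrP_bound (hm : 1 ≤ m) (hL : 0 ≤ L) (hφ : ∀ x y, |φ x - φ y| ≤ L * |x - y|)
    (hφ0 : φ 0 = 0) (hR : ∀ v ∈ A, ∀ i, |v i| ≤ R) (k : ℕ) (ε : Fin m → Bool) :
    ∀ v ∈ A, ctrP m L φ k ε v ≤ m * ((L / m) * R) := by
  intro v hv
  have hm0 : (0 : ℝ) < m := by exact_mod_cast hm
  unfold ctrP
  calc ∑ i, (if ε i then (1 : ℝ) else -1) * ctrFam m L φ k i (v i) ≤ ∑ i : Fin m, (L / m) * R := by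
        apply Finset.sum_le_sum
        intro i _
        have h1 : (if ε i then (1:ℝ) else -1) * ctrFam m L φ k i (v i)
            ≤ |ctrFam m L φ k i (v i)| := by
          split_ifs <;> simp [le_abs_self, neg_le_abs, neg_abs_le]
        refine h1.trans ((ctrFam_abs hm hL hφ hφ0 k i (v i)).trans ?_)
        exact mul_le_mul_of_nonneg_left (hR v hv i) (by positivity)
    _ = m * ((L / m) * R) := by
        simp [Finset.sum_const, Finset.card_univ, nsmul_eq_mul]

lemma ctrP_bddAbove (hm : 1 ≤ m) (hL : 0 ≤ L) (hφ : ∀ x y, |φ x - φ y| ≤ L * |x - y|)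
    (hφ0 : φ 0 = 0) (hR : ∀ v ∈ A, ∀ i, |v i| ≤ R) (k : ℕ) (ε : Fin m → Bool) :
    BddAbove (ctrP m L φ k ε '' A) :=
  aux_bddAbove_image (ctrP_bound hm hL hφ hφ0 hR k ε)

end ctr

lemma ctrG_step {m : ℕ} {L R : ℝ} {φ : ℝ → ℝ} {A : Set (Fin m → ℝ)}
    (hm : 1 ≤ m) (hL : 0 ≤ L) (hφ : ∀ x y, |φ x - φ y| ≤ L * |x - y|)
    (hφ0 : φ 0 = 0) (hA : A.Nonempty) (hR : ∀ v ∈ A, ∀ i, |v i| ≤ R)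
    {k : ℕ} (hk : k < m) :
    ctrG m L φ A k ≤ ctrG m L φ A (k + 1) := by
  classical
  have hm0 : (0 : ℝ) < m := by exact_mod_cast hm
  set j : Fin m := ⟨k, hk⟩ with hjdef
  set flip : (Fin m → Bool) → (Fin m → Bool) :=
    fun ε => Function.update ε j (!ε j) with hflipdef
  have hinv : Function.Involutive flip := by
    intro ε; funext i
    by_cases h : i = j
    · subst h; simp [flip]
    · simp [flip, Function.update_of_ne h]
  have hsumflip : ∀ (f : (Fin m → Bool) → ℝ), ∑ ε, f (flip ε) = ∑ ε, f ε := fun f =>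
    Equiv.sum_comp hinv.toPerm f
  -- facts about the family at and away from j
  have hfamj : ctrFam m L φ k j = fun x => (1 / (m : ℝ)) * φ x := by
    unfold ctrFam; simp [hjdef]
  have hfamj1 : ctrFam m L φ (k + 1) j = fun x => (L / m) * x := by
    unfold ctrFam; simp [hjdef]
  have hfamerase : ∀ i ∈ Finset.univ.erase j, ctrFam m L φ k i = ctrFam m L φ (k + 1) i := by
    intro i hi
    have hij : (i : ℕ) ≠ k := by
      have h1 := Finset.ne_of_mem_erase hi
      intro hc; exact h1 (Fin.ext (by simpa [hjdef] using hc))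
    unfold ctrFam
    simp only [show ((i : ℕ) < k) = ((i : ℕ) < k + 1) from propext (by omega)]
  have hsplit : ∀ (c : Fin m → Bool) (kk : ℕ) (w : Fin m → ℝ),
      ctrP m L φ kk c w = (if c j then (1 : ℝ) else -1) * ctrFam m L φ kk j (w j)
        + ∑ i ∈ Finset.univ.erase j, (if c i then (1 : ℝ) else -1) * ctrFam m L φ kk i (w i) := by
    intro c kk w; unfold ctrP; rw [← Finset.add_sum_erase _ _ (Finset.mem_univ j)]
  -- key pointwise inequality
  have key : ∀ ε : Fin m → Bool,
      sSup (ctrP m L φ k ε '' A) + sSup (ctrP m L φ k (flip ε) '' A)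
        ≤ sSup (ctrP m L φ (k + 1) ε '' A) + sSup (ctrP m L φ (k + 1) (flip ε) '' A) := by
    intro ε
    have hb1 := ctrP_bddAbove hm hL hφ hφ0 hR (k + 1) ε
    have hb2 := ctrP_bddAbove hm hL hφ hφ0 hR (k + 1) (flip ε)
    apply aux_sSup_add_sSup_le (hA.image _) (hA.image _)
    rintro _ ⟨u, hu, rfl⟩ _ ⟨v, hv, rfl⟩
    set s : ℝ := if ε j then (1 : ℝ) else -1 with hsdef
    have hsval : s = 1 ∨ s = -1 := by by_cases h : ε j <;> simp [hsdef, h]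
    have hflipsgn : (if flip ε j then (1 : ℝ) else -1) = -s := by
      by_cases h : ε j <;> simp [flip, hsdef, h]
    have hsignerase : ∀ i ∈ Finset.univ.erase j,
        (if flip ε i then (1 : ℝ) else -1) = (if ε i then (1 : ℝ) else -1) := by
      intro i hi
      rw [show flip ε i = ε i from Function.update_of_ne (Finset.ne_of_mem_erase hi) _ _]
    set Eu : ℝ := ∑ i ∈ Finset.univ.erase j,
      (if ε i then (1 : ℝ) else -1) * ctrFam m L φ (k + 1) i (u i) with hEu
    set Ev : ℝ := ∑ i ∈ Finset.univ.erase j,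
      (if ε i then (1 : ℝ) else -1) * ctrFam m L φ (k + 1) i (v i) with hEv
    have hu1 : ctrP m L φ k ε u = s * ((1 / (m : ℝ)) * φ (u j)) + Eu := by
      rw [hsplit, hfamj, hEu]
      congr 1
      exact Finset.sum_congr rfl (fun i hi => by rw [hfamerase i hi])
    have hv1 : ctrP m L φ k (flip ε) v = (-s) * ((1 / (m : ℝ)) * φ (v j)) + Ev := by
      rw [hsplit, hfamj, hflipsgn, hEv]
      congr 1
      exact Finset.sum_congr rfl (fun i hi => by rw [hsignerase i hi, hfamerase i hi])
    have hu2 : ctrP m L φ (k + 1) ε u = s * ((L / m) * u j) + Eu := by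
      rw [hsplit, hfamj1, hEu]
    have hv2 : ctrP m L φ (k + 1) ε v = s * ((L / m) * v j) + Ev := by
      rw [hsplit, hfamj1, hEv]
    have hu2' : ctrP m L φ (k + 1) (flip ε) u = (-s) * ((L / m) * u j) + Eu := by
      rw [hsplit, hfamj1, hflipsgn, hEu]
      congr 1
      exact Finset.sum_congr rfl (fun i hi => by rw [hsignerase i hi])
    have hv2' : ctrP m L φ (k + 1) (flip ε) v = (-s) * ((L / m) * v j) + Ev := by
      rw [hsplit, hfamj1, hflipsgn, hEv]
      congr 1
      exact Finset.sum_congr rfl (fun i hi => by rw [hsignerase i hi])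
    have hle1 : ctrP m L φ (k + 1) ε u ≤ sSup (ctrP m L φ (k + 1) ε '' A) :=
      le_csSup hb1 ⟨u, hu, rfl⟩
    have hle2 : ctrP m L φ (k + 1) (flip ε) v ≤ sSup (ctrP m L φ (k + 1) (flip ε) '' A) :=
      le_csSup hb2 ⟨v, hv, rfl⟩
    have hle3 : ctrP m L φ (k + 1) ε v ≤ sSup (ctrP m L φ (k + 1) ε '' A) :=
      le_csSup hb1 ⟨v, hv, rfl⟩
    have hle4 : ctrP m L φ (k + 1) (flip ε) u ≤ sSup (ctrP m L φ (k + 1) (flip ε) '' A) :=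
      le_csSup hb2 ⟨u, hu, rfl⟩
    -- the Lipschitz estimate
    have hlip : s * ((1 / (m : ℝ)) * φ (u j)) + (-s) * ((1 / (m : ℝ)) * φ (v j))
        ≤ |(L / m) * u j - (L / m) * v j| := by
      have hax : ∀ x : ℝ, s * x ≤ |x| := by
        rcases hsval with h | h <;> intro x <;> rw [h]
        · simpa using le_abs_self x
        · simpa using neg_le_abs x
      have h1 : s * ((1 / (m : ℝ)) * φ (u j) - (1 / (m : ℝ)) * φ (v j))
          ≤ |(1 / (m : ℝ)) * φ (u j) - (1 / (m : ℝ)) * φ (v j)| := hax _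
      have h2 : |(1 / (m : ℝ)) * φ (u j) - (1 / (m : ℝ)) * φ (v j)|
          ≤ (L / m) * |u j - v j| := by
        rw [← mul_sub, abs_mul, abs_of_nonneg (by positivity : (0:ℝ) ≤ 1 / (m:ℝ))]
        calc (1 / (m : ℝ)) * |φ (u j) - φ (v j)|
            ≤ (1 / (m : ℝ)) * (L * |u j - v j|) :=
              mul_le_mul_of_nonneg_left (hφ _ _) (by positivity)
          _ = (L / m) * |u j - v j| := by ring
      have h3 : (L / m) * |u j - v j| = |(L / m) * u j - (L / m) * v j| := by
        rw [← mul_sub, abs_mul, abs_of_nonneg (by positivity : (0:ℝ) ≤ L / (m:ℝ))]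
      linarith [h1, h2, h3, show s * ((1 / (m : ℝ)) * φ (u j) - (1 / (m : ℝ)) * φ (v j))
        = s * ((1 / (m : ℝ)) * φ (u j)) + (-s) * ((1 / (m : ℝ)) * φ (v j)) from by ring]
    have habs2 : |(L / m) * u j - (L / m) * v j|
        = |s * ((L / m) * u j - (L / m) * v j)| := by
      rcases hsval with h | h <;> rw [h]
      · simp
      · rw [neg_one_mul, abs_neg]
    rcases le_total 0 (s * ((L / m) * u j - (L / m) * v j)) with hc | hc
    · have heq : |(L / m) * u j - (L / m) * v j|
          = s * ((L / m) * u j) - s * ((L / m) * v j) := by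
        rw [habs2, abs_of_nonneg hc]; ring
      rw [hu1, hv1]
      rw [hu2] at hle1; rw [hv2'] at hle2
      linarith [hlip, hle1, hle2, heq]
    · have heq : |(L / m) * u j - (L / m) * v j|
          = s * ((L / m) * v j) - s * ((L / m) * u j) := by
        rw [habs2, abs_of_nonpos hc]; ring
      rw [hu1, hv1]
      rw [hv2] at hle3; rw [hu2'] at hle4
      linarith [hlip, hle3, hle4, heq]
  -- put the pairs together
  have h2 : (2 : ℝ) * ctrG m L φ A k ≤ 2 * ctrG m L φ A (k + 1) := by
    unfold ctrG
    calc (2 : ℝ) * ∑ ε : Fin m → Bool, sSup (ctrP m L φ k ε '' A)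
        = ∑ ε : Fin m → Bool,
            (sSup (ctrP m L φ k ε '' A) + sSup (ctrP m L φ k (flip ε) '' A)) := by
          rw [Finset.sum_add_distrib, hsumflip (fun ε => sSup (ctrP m L φ k ε '' A))]
          ring
      _ ≤ ∑ ε : Fin m → Bool,
            (sSup (ctrP m L φ (k + 1) ε '' A) + sSup (ctrP m L φ (k + 1) (flip ε) '' A)) :=
          Finset.sum_le_sum (fun ε _ => key ε)
      _ = 2 * ∑ ε : Fin m → Bool, sSup (ctrP m L φ (k + 1) ε '' A) := by
          rw [Finset.sum_add_distrib, hsumflip (fun ε => sSup (ctrP m L φ (k + 1) ε '' A))]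
          ring
  linarith


theorem stmt9 (m : ℕ) (hm : 1 ≤ m) (A : Set (Fin m → ℝ)) (hA : A.Nonempty)
    (hAb : Bornology.IsBounded A) (L : ℝ) (hL : 0 ≤ L) (φ : ℝ → ℝ)
    (hφ : ∀ x y, |φ x - φ y| ≤ L * |x - y|) (hφ0 : φ 0 = 0) :
    radComp m ((fun v => fun i => φ (v i)) '' A) ≤ L * radComp m A := by
  classical
  have hm0 : (0 : ℝ) < m := by exact_mod_cast hm
  obtain ⟨C, hC⟩ := hAb.exists_norm_le
  set R : ℝ := max C 0 with hRdef
  have hR : ∀ v ∈ A, ∀ i, |v i| ≤ R := by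
    intro v hv i
    have h1 : |v i| ≤ ‖v‖ := by simpa using norm_le_pi_norm v i
    exact h1.trans ((hC v hv).trans (le_max_left _ _))
  -- arrive via the interpolated family
  have hstep : ∀ n, n ≤ m → ctrG m L φ A 0 ≤ ctrG m L φ A n := by
    intro n
    induction n with
    | zero => intro _; exact le_rfl
    | succ p ih =>
      intro h
      exact (ih (by omega)).trans (ctrG_step hm hL hφ hφ0 hA hR (by omega))
  have hE0 : radComp m ((fun v => fun i => φ (v i)) '' A)
      = ((2 : ℝ) ^ m)⁻¹ * ctrG m L φ A 0 := by
    unfold radComp ctrG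
    congr 1
    apply Finset.sum_congr rfl
    intro ε _
    rw [Set.image_image]
    congr 1
    apply Set.image_congr'
    intro v
    rw [Finset.mul_sum]
    unfold ctrP
    apply Finset.sum_congr rfl
    intro i _
    unfold ctrFam
    simp only [Nat.not_lt_zero, if_false]
    ring
  have hEm : L * radComp m A = ((2 : ℝ) ^ m)⁻¹ * ctrG m L φ A m := by
    unfold radComp ctrG
    rw [← mul_assoc, mul_comm L, mul_assoc, Finset.mul_sum]
    congr 1
    apply Finset.sum_congr rfl
    intro ε _
    have hb : BddAbove ((fun v => (1 / (m : ℝ)) * ∑ i, (if ε i then (1 : ℝ) else -1) * v i) '' A) := by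
      apply aux_bddAbove_image (B := R)
      intro v hv
      calc (1 / (m : ℝ)) * ∑ i, (if ε i then (1 : ℝ) else -1) * v i
          ≤ (1 / (m : ℝ)) * ∑ _i : Fin m, R := by
            apply mul_le_mul_of_nonneg_left _ (by positivity)
            apply Finset.sum_le_sum
            intro i _
            have h1 : (if ε i then (1 : ℝ) else -1) * v i ≤ |v i| := by
              split_ifs <;> simp [le_abs_self, neg_le_abs, neg_abs_le]
            exact h1.trans (hR v hv i)
        _ = R := by
            rw [Finset.sum_const, Finset.card_univ, Fintype.card_fin, nsmul_eq_mul]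
            field_simp
    rw [← aux_sSup_const_mul hL (hA.image _) hb, Set.image_image]
    congr 1
    apply Set.image_congr'
    intro v
    unfold ctrP
    simp only [Finset.mul_sum]
    apply Finset.sum_congr rfl
    intro i _
    unfold ctrFam
    simp only [i.isLt, if_true]
    ring
  rw [hE0, hEm]
  exact mul_le_mul_of_nonneg_left (hstep m le_rfl) (by positivity)
end

section
/- (Massart's lemma.) Let m ≥ 1 and let A be a nonempty finite subset of ℝ^m. Then R̂(A) ≤ (max_{v ∈ A} ‖v‖₂) · √(2·log|A|) / m, where ‖v‖₂ is the Euclidean norm and |A| is the cardinality of A. -/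
open Finset

/-!
Exponential-moment argument. For every `s`, Jensen's inequality for `exp`, the bound of a maximum
by the sum over `A`, and `cosh x ≤ exp (x ^ 2 / 2)` for each Rademacher sign give
`exp (s · m R̂(A)) ≤ |A| · exp (s² r² / 2)`, with `r` the largest Euclidean norm in `A`.
Taking logarithms, `s ↦ s² r² / 2 - s · m R̂(A) + log |A|` is a nonnegative quadratic, so its
discriminant is nonpositive: `(m R̂(A))² ≤ 2 r² log |A|`.
-/

open Real

section Rademacher

variable {ι : Type*} [Fintype ι]

def rademacherSum (ε : ι → Bool) (x : ι → ℝ) : ℝ :=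
  ∑ i, (if ε i then 1 else -1) * x i

lemma rademacherSum_smul (ε : ι → Bool) (c : ℝ) (x : ι → ℝ) :
    rademacherSum ε (c • x) = c * rademacherSum ε x := by
  simp only [rademacherSum, mul_sum, Pi.smul_apply, smul_eq_mul]
  exact sum_congr rfl fun i _ => by ring

lemma sum_exp_rademacherSum [DecidableEq ι] (x : ι → ℝ) :
    ∑ ε : ι → Bool, exp (rademacherSum ε x) = ∏ i, 2 * cosh (x i) := by
  simp only [rademacherSum, exp_sum]
  rw [← Fintype.prod_sum fun i (b : Bool) => exp ((if b then 1 else -1) * x i)]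
  exact prod_congr rfl fun i _ => by
    simp only [Fintype.sum_bool, cosh_eq, if_true, Bool.false_eq_true, if_false, one_mul,
      neg_one_mul]
    ring

lemma sum_exp_rademacherSum_le [DecidableEq ι] (x : ι → ℝ) :
    ∑ ε : ι → Bool, exp (rademacherSum ε x) ≤ 2 ^ Fintype.card ι * exp ((∑ i, x i ^ 2) / 2) := by
  calc ∑ ε : ι → Bool, exp (rademacherSum ε x)
      = ∏ i, 2 * cosh (x i) := sum_exp_rademacherSum x
    _ ≤ ∏ i, 2 * exp (x i ^ 2 / 2) :=
      prod_le_prod (fun i _ => by positivity) fun i _ => by gcongr; exact cosh_le_exp_half_sq _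
    _ = 2 ^ Fintype.card ι * exp ((∑ i, x i ^ 2) / 2) := by
      rw [prod_mul_distrib, prod_const, card_univ, sum_div, exp_sum]

end Rademacher

lemma exp_mul_sSup_image_le_sum_exp {α : Type*} {A : Set α} (hA : A.Nonempty) (hAf : A.Finite)
    (f : α → ℝ) (t : ℝ) : exp (t * sSup (f '' A)) ≤ ∑ v ∈ hAf.toFinset, exp (t * f v) := by
  obtain ⟨v, hv, hsup⟩ := (hA.image f).csSup_mem (hAf.image f)
  rw [← hsup]
  exact single_le_sum (f := fun w => exp (t * f w)) (fun w _ => (exp_pos _).le)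
    (hAf.mem_toFinset.mpr hv)

lemma exp_average_le_average_exp {α : Type*} [Fintype α] [Nonempty α] (f : α → ℝ) :
    exp ((Fintype.card α : ℝ)⁻¹ * ∑ a, f a) ≤ (Fintype.card α : ℝ)⁻¹ * ∑ a, exp (f a) := by
  have hw : ∑ _a : α, (Fintype.card α : ℝ)⁻¹ = 1 := by
    rw [sum_const, card_univ, nsmul_eq_mul, mul_inv_cancel₀ (by positivity)]
  simpa only [mul_sum, smul_eq_mul] using
    convexOn_exp.map_sum_le (fun _ _ => by positivity) hw (fun a _ => Set.mem_univ (f a))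

lemma radComp_eq_average (m : ℕ) (A : Set (Fin m → ℝ)) :
    radComp m A = ((Fintype.card (Fin m → Bool) : ℝ))⁻¹ *
      ∑ ε : Fin m → Bool, sSup ((fun v => (1 / (m : ℝ)) * rademacherSum ε v) '' A) := by
  simp only [Fintype.card_fun, Fintype.card_bool, Fintype.card_fin, Nat.cast_pow, Nat.cast_ofNat]
  rfl

theorem exp_mul_radComp_le {m : ℕ} (hm : 0 < m) {A : Set (Fin m → ℝ)} (hA : A.Nonempty)
    (hAf : A.Finite) {R : ℝ} (hR : ∀ v ∈ A, ∑ i, v i ^ 2 ≤ R) (s : ℝ) :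
    exp (m * s * radComp m A) ≤ hAf.toFinset.card * exp (s ^ 2 * R / 2) := by
  set S := hAf.toFinset
  have h2m : ((Fintype.card (Fin m → Bool) : ℕ) : ℝ) = 2 ^ m := by simp
  calc exp (m * s * radComp m A)
      ≤ ((2 : ℝ) ^ m)⁻¹ * ∑ ε : Fin m → Bool,
          exp (m * s * sSup ((fun v => (1 / (m : ℝ)) * rademacherSum ε v) '' A)) := by
        rw [radComp_eq_average, mul_left_comm, mul_sum, ← h2m]
        exact exp_average_le_average_exp _
    _ ≤ ((2 : ℝ) ^ m)⁻¹ * ∑ ε : Fin m → Bool, ∑ v ∈ S, exp (rademacherSum ε (s • v)) := by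
        gcongr with ε
        refine (exp_mul_sSup_image_le_sum_exp hA hAf _ _).trans_eq (sum_congr rfl fun v _ => ?_)
        rw [rademacherSum_smul]
        field_simp
    _ ≤ ((2 : ℝ) ^ m)⁻¹ * ∑ _v ∈ S, 2 ^ m * exp (s ^ 2 * R / 2) := by
        rw [sum_comm]
        gcongr with v hv
        refine (sum_exp_rademacherSum_le _).trans ?_
        simp only [Fintype.card_fin, Pi.smul_apply, smul_eq_mul, mul_pow, ← mul_sum]
        gcongr
        exact hR v (hAf.mem_toFinset.mp hv)
    _ = S.card * exp (s ^ 2 * R / 2) := by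
        rw [sum_const, nsmul_eq_mul]
        field_simp

theorem mul_radComp_mul_le {m : ℕ} (hm : 0 < m) {A : Set (Fin m → ℝ)} (hA : A.Nonempty)
    (hAf : A.Finite) {R : ℝ} (hR : ∀ v ∈ A, ∑ i, v i ^ 2 ≤ R) (s : ℝ) :
    m * radComp m A * s ≤ log hAf.toFinset.card + s ^ 2 * R / 2 := by
  have hcard : (0 : ℝ) < hAf.toFinset.card := by simpa using hA
  have h := log_le_log (exp_pos _) (exp_mul_radComp_le hm hA hAf hR s)
  rw [log_exp, log_mul hcard.ne' (exp_pos _).ne', log_exp] at h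
  linarith

lemma le_sqrt_of_forall_mul_le_add_sq {a L R : ℝ} (h : ∀ s, a * s ≤ L + s ^ 2 * R / 2) :
    a ≤ √(2 * L * R) := by
  have hdiscr : discrim (R / 2) (-a) L ≤ 0 :=
    discrim_le_zero fun s => by linarith [h s]
  refine (le_abs_self a).trans (abs_le_sqrt ?_)
  rw [discrim] at hdiscr
  linarith

/-- Massart's lemma. -/
theorem stmt10 (m : ℕ) (hm : 1 ≤ m) (A : Set (Fin m → ℝ)) (hA : A.Nonempty)
    (hAf : A.Finite) :
    radComp m A ≤
      sSup ((fun v => Real.sqrt (∑ i, (v i) ^ 2)) '' A) *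
        Real.sqrt (2 * Real.log (hAf.toFinset.card)) / m := by
  set r := sSup ((fun v => Real.sqrt (∑ i, (v i) ^ 2)) '' A)
  have hr_ge : ∀ v ∈ A, √(∑ i, v i ^ 2) ≤ r := fun v hv =>
    le_csSup (hAf.image _).bddAbove ⟨v, hv, rfl⟩
  have hr : 0 ≤ r := (sqrt_nonneg _).trans (hr_ge _ hA.some_mem)
  have hR : ∀ v ∈ A, ∑ i, v i ^ 2 ≤ r ^ 2 := fun v hv => (sqrt_le_left hr).mp (hr_ge v hv)
  have hmass := le_sqrt_of_forall_mul_le_add_sq (mul_radComp_mul_le hm hA hAf hR)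
  rw [sqrt_mul' _ (sq_nonneg r), sqrt_sq hr] at hmass
  rw [le_div_iff₀ (by exact_mod_cast hm)]
  linarith
end

section
/- (Free-robustness decomposition of the T gate into Clifford channels.) Let T := diag(1, e^{iπ/4}), S := diag(1, i), and Z := diag(1, −1) be 2×2 complex matrices. Then for every 2×2 complex matrix ρ, T ρ T† = (1/2 + √2/2) · S ρ S† + (1/2) · (SZ) ρ (SZ)† − (√2/2) · Z ρ Z†, where M† denotes the conjugate transpose of M. In particular, the T-gate channel is an affine combination of Clifford unitary channels with negative-coefficient weight √2/2, so its free robustness with respect to stabilizer channels is at most √2/2. -/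
open Matrix

/-- Free-robustness decomposition of the T gate into Clifford channels:
`T ρ T† = (1/2 + √2/2)·S ρ S† + (1/2)·(SZ) ρ (SZ)† − (√2/2)·Z ρ Z†`. -/
theorem stmt15
    (T : Matrix (Fin 2) (Fin 2) ℂ)
    (hT : T = !![1, 0; 0, Complex.exp (Complex.I * (Real.pi / 4))])
    (S : Matrix (Fin 2) (Fin 2) ℂ) (hS : S = !![1, 0; 0, Complex.I])
    (Z : Matrix (Fin 2) (Fin 2) ℂ) (hZ : Z = !![1, 0; 0, -1])
    (ρ : Matrix (Fin 2) (Fin 2) ℂ) :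
    T * ρ * Tᴴ =
      ((1 / 2 + Real.sqrt 2 / 2 : ℝ) • (S * ρ * Sᴴ) +
        (1 / 2 : ℝ) • ((S * Z) * ρ * (S * Z)ᴴ)) -
        (Real.sqrt 2 / 2 : ℝ) • (Z * ρ * Zᴴ) := by
  have h : Complex.exp (Complex.I * (Real.pi / 4)) =
      (Real.sqrt 2 / 2 : ℝ) + (Real.sqrt 2 / 2 : ℝ) * Complex.I := by
    rw [mul_comm, show (↑Real.pi / 4 : ℂ) = ((Real.pi / 4 : ℝ) : ℂ) by push_cast; ring,
      Complex.exp_mul_I, ← Complex.ofReal_cos, ← Complex.ofReal_sin,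
      Real.cos_pi_div_four, Real.sin_pi_div_four]
  have h2 : (Real.sqrt 2 : ℂ) * (Real.sqrt 2 : ℂ) = 2 := by
    norm_cast
    exact Real.mul_self_sqrt (by norm_num)
  have hI : Complex.I ^ 2 = -1 := Complex.I_sq
  subst hT hS hZ
  rw [Matrix.eta_fin_two ρ]
  simp only [Matrix.mul_fin_two, h]
  ext i j
  fin_cases i <;> fin_cases j <;>
    simp [Matrix.vecMul, dotProduct, Fin.sum_univ_two, Matrix.conjTranspose_apply,
      Complex.real_smul, Complex.conj_ofReal, map_ofNat] <;>
    push_cast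
  · ring
  · ring
  · ring
  · linear_combination (ρ 1 1 / 2) * h2 +
      (ρ 1 1 * (1 + (Real.sqrt 2 : ℂ) / 2 -
        (Real.sqrt 2 : ℂ) * (Real.sqrt 2 : ℂ) / 4)) * hI
end

section
/- (Gaussian version of Theorem 1.) Let m ≥ 1, let F be a nonempty bounded subset of ℝ^m, let λ ≥ 0, and let w ∈ ℝ^m satisfy w = (1+λ)u − λv for some u, v ∈ conv(F). Then Ĝ(F) ≤ Ĝ(F ∪ {w}) ≤ (1+λ)·Ĝ(F). -/
open Finset MeasureTheory ProbabilityTheory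

/-- The empirical Gaussian complexity of a set `A ⊆ ℝ^m`:
`Ĝ(A) = E_{g ∼ N(0,1)^m}[sup_{v ∈ A} (1/m) Σ_i g_i v_i]`. -/
noncomputable def gaussComp (m : ℕ) (A : Set (Fin m → ℝ)) : ℝ :=
  ∫ g, sSup ((fun v => (1 / (m : ℝ)) * ∑ i, g i * v i) '' A)
    ∂(Measure.pi fun _ : Fin m => gaussianReal 0 1)

/-!
For a continuous linear functional `f`, write `σ_F f = sup_{x ∈ F} f x`. Since
`f w = f u + λ f (u - v)` and `f u ≤ σ_F f`, pointwise `σ_{F ∪ {w}} f ≤ σ_F f + λ max (f (u - v)) 0`.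
For a symmetric random functional, `E max (f (u - v)) 0 = E |f (u - v)| / 2`, and
`|f (u - v)| ≤ σ_F f + σ_F (-f)`, whose expectation is `2 E σ_F f` by symmetry again.
The Gaussian complexity is the case `f = (1/m) ⟨g, ·⟩` with `g` a standard Gaussian vector.
-/

section SupportFun

variable {E : Type*} [NormedAddCommGroup E] [NormedSpace ℝ E] {F : Set E} {R : ℝ}

noncomputable def supportFun (F : Set E) (f : StrongDual ℝ E) : ℝ := sSup (f '' F)

lemma bddAbove_image_of_isBounded (hF : Bornology.IsBounded F) (f : StrongDual ℝ E) :
    BddAbove (f '' F) :=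
  (f.lipschitz.isBounded_image hF).bddAbove

lemma apply_le_supportFun (hF : Bornology.IsBounded F) (f : StrongDual ℝ E) {x : E}
    (hx : x ∈ F) : f x ≤ supportFun F f :=
  le_csSup (bddAbove_image_of_isBounded hF f) (Set.mem_image_of_mem f hx)

lemma apply_le_supportFun_of_mem_convexHull (hF : Bornology.IsBounded F) (f : StrongDual ℝ E)
    {x : E} (hx : x ∈ convexHull ℝ F) : f x ≤ supportFun F f :=
  convexHull_min (fun _ hy => apply_le_supportFun hF f hy)
    (convex_halfSpace_le f.isLinear _) hx

lemma supportFun_mono {G : Set E} (hF : F.Nonempty) (hG : Bornology.IsBounded G) (hFG : F ⊆ G)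
    (f : StrongDual ℝ E) : supportFun F f ≤ supportFun G f :=
  csSup_le_csSup (bddAbove_image_of_isBounded hG f) (hF.image f) (Set.image_mono hFG)

lemma supportFun_union_singleton (hF : F.Nonempty) (hFb : Bornology.IsBounded F)
    (f : StrongDual ℝ E) (w : E) : supportFun (F ∪ {w}) f = max (supportFun F f) (f w) := by
  rw [supportFun, Set.image_union, Set.image_singleton, csSup_union
    (bddAbove_image_of_isBounded hFb f) (hF.image f) bddAbove_singleton
    (Set.singleton_nonempty _), csSup_singleton, supportFun]

lemma supportFun_le_add_mul_norm_sub (hF : F.Nonempty) (hR : ∀ x ∈ F, ‖x‖ ≤ R)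
    (f f' : StrongDual ℝ E) : supportFun F f ≤ supportFun F f' + R * ‖f - f'‖ := by
  have hFb : Bornology.IsBounded F := isBounded_iff_forall_norm_le.2 ⟨R, hR⟩
  refine csSup_le (hF.image f) ?_
  rintro _ ⟨x, hx, rfl⟩
  calc f x = f' x + (f - f') x := by simp
    _ ≤ supportFun F f' + ‖f - f'‖ * ‖x‖ :=
      add_le_add (apply_le_supportFun hFb f' hx) ((le_abs_self _).trans ((f - f').le_opNorm x))
    _ ≤ supportFun F f' + R * ‖f - f'‖ := by
      rw [mul_comm]; gcongr; exact hR x hx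

lemma lipschitzWith_supportFun (hF : F.Nonempty) (hR : ∀ x ∈ F, ‖x‖ ≤ R) :
    LipschitzWith R.toNNReal (supportFun F) :=
  LipschitzWith.of_le_add_mul' R fun f f' => by
    simpa only [dist_eq_norm] using supportFun_le_add_mul_norm_sub hF hR f f'

lemma abs_supportFun_le (hF : F.Nonempty) (hR : ∀ x ∈ F, ‖x‖ ≤ R) (f : StrongDual ℝ E) :
    |supportFun F f| ≤ R * ‖f‖ := by
  have hzero : supportFun F 0 = 0 := by
    simp only [supportFun, zero_apply, hF.image_const, csSup_singleton]
  have h₁ := supportFun_le_add_mul_norm_sub hF hR 0 f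
  have h₂ := supportFun_le_add_mul_norm_sub hF hR f 0
  rw [hzero, zero_sub, norm_neg] at h₁
  rw [hzero, sub_zero] at h₂
  rw [abs_le]
  constructor <;> linarith

lemma supportFun_union_singleton_le (hF : F.Nonempty) (hFb : Bornology.IsBounded F)
    {u : E} (hu : u ∈ convexHull ℝ F) (v : E) {lam : ℝ} (hlam : 0 ≤ lam)
    (f : StrongDual ℝ E) :
    supportFun (F ∪ {(1 + lam) • u - lam • v}) f
      ≤ supportFun F f + lam * max (f (u - v)) 0 := by
  have hfu := apply_le_supportFun_of_mem_convexHull hFb f hu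
  have hpos : 0 ≤ lam * max (f (u - v)) 0 := mul_nonneg hlam (le_max_right _ _)
  rw [supportFun_union_singleton hF hFb]
  refine max_le (by linarith) ?_
  calc f ((1 + lam) • u - lam • v) = f u + lam * f (u - v) := by
        simp only [map_sub, map_smul, smul_eq_mul]; ring
    _ ≤ supportFun F f + lam * max (f (u - v)) 0 := by
        gcongr; exact le_max_left _ _

lemma abs_apply_sub_le_supportFun_add (hFb : Bornology.IsBounded F) {u v : E}
    (hu : u ∈ convexHull ℝ F) (hv : v ∈ convexHull ℝ F) (f : StrongDual ℝ E) :
    |f (u - v)| ≤ supportFun F f + supportFun F (-f) := by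
  have h₁ := apply_le_supportFun_of_mem_convexHull hFb f hu
  have h₂ := apply_le_supportFun_of_mem_convexHull hFb f hv
  have h₃ := apply_le_supportFun_of_mem_convexHull hFb (-f) hu
  have h₄ := apply_le_supportFun_of_mem_convexHull hFb (-f) hv
  simp only [neg_apply] at h₃ h₄
  rw [map_sub, abs_le]
  constructor <;> linarith

end SupportFun

section Symmetrization

variable {Ω : Type*} [AddGroup Ω] [MeasurableSpace Ω] [MeasurableNeg Ω] {μ : Measure Ω}
  [μ.IsNegInvariant]

lemma integral_eq_zero_of_odd {X : Ω → ℝ} (hX : ∀ g, X (-g) = -X g) : ∫ g, X g ∂μ = 0 := by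
  have h := integral_neg_eq_self X μ
  simp only [hX, integral_neg] at h
  linarith

lemma integral_max_zero_eq_integral_abs_div_two {X : Ω → ℝ} (hX : ∀ g, X (-g) = -X g) (hint : Integrable X μ) :
    ∫ g, max (X g) 0 ∂μ = (∫ g, |X g| ∂μ) / 2 := by
  have hmax : ∀ g, max (X g) 0 = (X g + |X g|) / 2 := fun g => by
    rcases le_total (X g) 0 with h | h
    · rw [max_eq_right h, abs_of_nonpos h]; ring
    · rw [max_eq_left h, abs_of_nonneg h]; ring
  simp only [hmax, integral_div, integral_add hint hint.abs, integral_eq_zero_of_odd hX, zero_add]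

end Symmetrization

section RandomFunctional

variable {E Ω : Type*} [NormedAddCommGroup E] [NormedSpace ℝ E] {F : Set E}
  [NormedAddCommGroup Ω] [NormedSpace ℝ Ω] [MeasurableSpace Ω] [BorelSpace Ω] {μ : Measure Ω}
  (B : Ω →L[ℝ] StrongDual ℝ E)

lemma integrable_supportFun_comp (hF : F.Nonempty) (hFb : Bornology.IsBounded F)
    (hμ : Integrable id μ) : Integrable (fun g => supportFun F (B g)) μ := by
  obtain ⟨R, hR⟩ := hFb.exists_norm_le
  refine (hμ.norm.const_mul (R * ‖B‖)).mono'
    ((lipschitzWith_supportFun hF hR).continuous.comp B.continuous).aestronglyMeasurable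
    (ae_of_all _ fun g => ?_)
  rw [Real.norm_eq_abs, mul_assoc]
  exact (abs_supportFun_le hF hR (B g)).trans
    (mul_le_mul_of_nonneg_left (B.le_opNorm g) ((norm_nonneg _).trans (hR _ hF.some_mem)))

lemma integral_supportFun_le_of_subset {G : Set E} (hF : F.Nonempty) (hG : Bornology.IsBounded G)
    (hFG : F ⊆ G) (hμ : Integrable id μ) :
    ∫ g, supportFun F (B g) ∂μ ≤ ∫ g, supportFun G (B g) ∂μ :=
  integral_mono (integrable_supportFun_comp B hF (hG.subset hFG) hμ)
    (integrable_supportFun_comp B (hF.mono hFG) hG hμ) fun g => supportFun_mono hF hG hFG (B g)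

lemma integral_max_apply_sub_zero_le [μ.IsNegInvariant] (hF : F.Nonempty)
    (hFb : Bornology.IsBounded F) {u v : E} (hu : u ∈ convexHull ℝ F) (hv : v ∈ convexHull ℝ F)
    (hμ : Integrable id μ) :
    ∫ g, max (B g (u - v)) 0 ∂μ ≤ ∫ g, supportFun F (B g) ∂μ := by
  have hint := integrable_supportFun_comp B hF hFb hμ
  have hint_neg : Integrable (fun g => supportFun F (-B g)) μ := by
    simpa only [map_neg] using hint.comp_neg
  have hint_uv : Integrable (fun g => B g (u - v)) μ := (B.flip (u - v)).integrable_comp hμ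
  rw [integral_max_zero_eq_integral_abs_div_two (fun g => by simp) hint_uv]
  have hsymm : ∫ g, supportFun F (-B g) ∂μ = ∫ g, supportFun F (B g) ∂μ := by
    simpa only [map_neg] using integral_neg_eq_self (fun g => supportFun F (B g)) μ
  have habs : ∫ g, |B g (u - v)| ∂μ ≤ ∫ g, (supportFun F (B g) + supportFun F (-B g)) ∂μ :=
    integral_mono hint_uv.abs (hint.add hint_neg) fun g => abs_apply_sub_le_supportFun_add hFb hu hv (B g)
  rw [integral_add hint hint_neg, hsymm] at habs
  linarith

theorem integral_supportFun_union_singleton_le [μ.IsNegInvariant] (hF : F.Nonempty)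
    (hFb : Bornology.IsBounded F) {u v : E} (hu : u ∈ convexHull ℝ F) (hv : v ∈ convexHull ℝ F)
    {lam : ℝ} (hlam : 0 ≤ lam) (hμ : Integrable id μ) :
    ∫ g, supportFun (F ∪ {(1 + lam) • u - lam • v}) (B g) ∂μ
      ≤ (1 + lam) * ∫ g, supportFun F (B g) ∂μ := by
  have hint := integrable_supportFun_comp B hF hFb hμ
  have hint_max : Integrable (fun g => max (B g (u - v)) 0) μ :=
    ((B.flip (u - v)).integrable_comp hμ).pos_part
  calc ∫ g, supportFun (F ∪ {(1 + lam) • u - lam • v}) (B g) ∂μ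
      ≤ ∫ g, (supportFun F (B g) + lam * max (B g (u - v)) 0) ∂μ :=
        integral_mono (integrable_supportFun_comp B (hF.mono Set.subset_union_left)
          (hFb.union Bornology.isBounded_singleton) hμ) (hint.add (hint_max.const_mul lam))
          fun g => supportFun_union_singleton_le hF hFb hu v hlam (B g)
    _ = ∫ g, supportFun F (B g) ∂μ + lam * ∫ g, max (B g (u - v)) 0 ∂μ := by
        rw [integral_add hint (hint_max.const_mul lam), integral_const_mul]
    _ ≤ ∫ g, supportFun F (B g) ∂μ + lam * ∫ g, supportFun F (B g) ∂μ := by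
        have := integral_max_apply_sub_zero_le B hF hFb hu hv hμ
        gcongr
    _ = (1 + lam) * ∫ g, supportFun F (B g) ∂μ := by ring

end RandomFunctional

instance isNegInvariant_gaussianReal (v : NNReal) : (gaussianReal 0 v).IsNegInvariant :=
  ⟨by simpa [Measure.neg] using gaussianReal_map_neg (μ := 0) (v := v)⟩

lemma integrable_id_pi_gaussianReal {ι : Type*} [Fintype ι] (μ : ι → ℝ) (v : ι → NNReal) :
    Integrable id (Measure.pi fun i => gaussianReal (μ i) (v i)) :=
  Integrable.of_eval fun _ => integrable_eval IsGaussian.integrable_id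

noncomputable def dotProductCLM (ι : Type*) [Fintype ι] : (ι → ℝ) →L[ℝ] StrongDual ℝ (ι → ℝ) :=
  ∑ i, (ContinuousLinearMap.mul ℝ ℝ).bilinearComp (ContinuousLinearMap.proj i)
    (ContinuousLinearMap.proj i)

lemma dotProductCLM_apply {ι : Type*} [Fintype ι] (g v : ι → ℝ) :
    dotProductCLM ι g v = ∑ i, g i * v i := by
  simp [dotProductCLM]

lemma gaussComp_eq_integral_supportFun (m : ℕ) (A : Set (Fin m → ℝ)) :
    gaussComp m A = ∫ g, supportFun A (((1 / (m : ℝ)) • dotProductCLM (Fin m)) g)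
      ∂(Measure.pi fun _ : Fin m => gaussianReal 0 1) := by
  simp only [gaussComp, supportFun, smul_apply, dotProductCLM_apply]
  rfl

theorem stmt16_general (m : ℕ) (F : Set (Fin m → ℝ)) (hF : F.Nonempty)
    (hFb : Bornology.IsBounded F) (lam : ℝ) (hlam : 0 ≤ lam) (w u v : Fin m → ℝ)
    (hu : u ∈ convexHull ℝ F) (hv : v ∈ convexHull ℝ F)
    (hw : w = (1 + lam) • u - lam • v) :
    gaussComp m F ≤ gaussComp m (F ∪ {w}) ∧
      gaussComp m (F ∪ {w}) ≤ (1 + lam) * gaussComp m F := by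
  subst hw
  have hμ := integrable_id_pi_gaussianReal (fun _ : Fin m => 0) fun _ => 1
  simp only [gaussComp_eq_integral_supportFun]
  exact ⟨integral_supportFun_le_of_subset _ hF (hFb.union Bornology.isBounded_singleton)
    Set.subset_union_left hμ, integral_supportFun_union_singleton_le _ hF hFb hu hv hlam hμ⟩

theorem stmt16 (m : ℕ) (hm : 1 ≤ m) (F : Set (Fin m → ℝ)) (hF : F.Nonempty)
    (hFb : Bornology.IsBounded F) (lam : ℝ) (hlam : 0 ≤ lam) (w u v : Fin m → ℝ)
    (hu : u ∈ convexHull ℝ F) (hv : v ∈ convexHull ℝ F)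
    (hw : w = (1 + lam) • u - lam • v) :
    gaussComp m F ≤ gaussComp m (F ∪ {w}) ∧
      gaussComp m (F ∪ {w}) ≤ (1 + lam) * gaussComp m F :=
  stmt16_general m F hF hFb lam hlam w u v hu hv hw
end

section
/- (Gaussian version of Theorem 2.) Let m ≥ 1, k ≥ 0, let G₀, G₁, …, G_k be nonempty bounded subsets of ℝ^m, and let γ ≥ 0 satisfy G_{j+1} ⊆ (1+γ)·conv(G_j) + (−γ)·conv(G_j) for every 0 ≤ j < k (Minkowski sum). Suppose moreover that γ' ≥ 0 satisfies G_k ⊆ (1+γ')·conv(G₀) + (−γ')·conv(G₀). Then Ĝ(G_k) ≤ min{(1+2γ)^k, 1+2γ'}·Ĝ(G₀). -/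
/-!
For a fixed `g`, the supremum of the linear functional `v ↦ (1/m) ∑ gᵢ vᵢ` over
`(1 + γ) • conv A + (-γ) • conv A` is at most `1 + γ` times its supremum over `A` plus `γ` times
the supremum over `A` of the functional for `-g`, since a linear functional has the same
supremum over `A` and over `conv A`. The standard Gaussian vector is symmetric, so `g` and `-g`
contribute the same expectation and one inclusion costs a factor `1 + 2γ`. Chaining the
inclusions `G j → G (j + 1)` gives `(1 + 2γ) ^ k`; the single inclusion `G 0 → G k` gives
`1 + 2γ'`.
-/

open Finset MeasureTheory ProbabilityTheory
open scoped Pointwise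

section SupportFunction

variable {E : Type*} [AddCommGroup E] [Module ℝ E]

lemma LinearMap.le_csSup_image_of_mem_convexHull (ℓ : E →ₗ[ℝ] ℝ) {A : Set E}
    (hA : BddAbove (ℓ '' A)) {u : E} (hu : u ∈ convexHull ℝ A) : ℓ u ≤ sSup (ℓ '' A) :=
  convexHull_min (t := {w | ℓ w ≤ sSup (ℓ '' A)}) (fun _ ha => le_csSup hA ⟨_, ha, rfl⟩)
    (convex_halfSpace_le ℓ.isLinear _) hu

lemma LinearMap.csSup_image_le_of_subset_add_smul_convexHull (ℓ : E →ₗ[ℝ] ℝ) {A B : Set E}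
    (hB : B.Nonempty) (hA : BddAbove (ℓ '' A)) (hA' : BddAbove ((-ℓ) '' A)) {γ : ℝ}
    (hγ : 0 ≤ γ) (hBA : B ⊆ (1 + γ) • convexHull ℝ A + (-γ) • convexHull ℝ A) :
    sSup (ℓ '' B) ≤ (1 + γ) * sSup (ℓ '' A) + γ * sSup ((-ℓ) '' A) := by
  refine csSup_le (hB.image _) ?_
  rintro _ ⟨_, hb, rfl⟩
  obtain ⟨_, ⟨u, hu, rfl⟩, _, ⟨u', hu', rfl⟩, rfl⟩ := hBA hb
  have h := ℓ.le_csSup_image_of_mem_convexHull hA hu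
  have h' := (-ℓ).le_csSup_image_of_mem_convexHull hA' hu'
  simp only [map_add, map_smul, smul_eq_mul, LinearMap.neg_apply] at h' ⊢
  nlinarith

end SupportFunction

instance (v : NNReal) : (gaussianReal 0 v).IsNegInvariant :=
  ⟨by rw [Measure.neg, gaussianReal_map_neg, neg_zero]⟩

lemma integrable_norm_pi_gaussianReal {ι : Type*} [Fintype ι] (a : ι → ℝ) (v : ι → NNReal) :
    Integrable (fun g : ι → ℝ => ‖g‖) (Measure.pi fun i => gaussianReal (a i) (v i)) := by
  refine (Integrable.of_eval fun i => ?_).norm (f := id)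
  exact (measurePreserving_eval _ i).integrable_comp_of_integrable IsGaussian.integrable_id

noncomputable def gaussFunctional (m : ℕ) (g : Fin m → ℝ) : (Fin m → ℝ) →ₗ[ℝ] ℝ where
  toFun v := (1 / (m : ℝ)) * ∑ i, g i * v i
  map_add' v w := by simp only [Pi.add_apply, mul_add, sum_add_distrib]
  map_smul' c v := by
    simp only [Pi.smul_apply, smul_eq_mul, RingHom.id_apply, mul_sum]
    exact sum_congr rfl fun _ _ => by ring

lemma gaussFunctional_neg (m : ℕ) (g : Fin m → ℝ) :
    gaussFunctional m (-g) = -gaussFunctional m g := by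
  ext v; simp [gaussFunctional, sum_neg_distrib]

lemma gaussFunctional_add (m : ℕ) (g g' v : Fin m → ℝ) :
    gaussFunctional m (g + g') v = gaussFunctional m g v + gaussFunctional m g' v := by
  simp [gaussFunctional, add_mul, sum_add_distrib, mul_add]

lemma abs_gaussFunctional_le (m : ℕ) (g v : Fin m → ℝ) :
    |gaussFunctional m g v| ≤ ‖g‖ * ‖v‖ := by
  rcases Nat.eq_zero_or_pos m with rfl | hm
  · simp only [gaussFunctional, LinearMap.coe_mk, AddHom.coe_mk, univ_eq_empty, sum_empty,
      mul_zero, abs_zero]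
    positivity
  have hsum : |∑ i, g i * v i| ≤ m * (‖g‖ * ‖v‖) := calc
    |∑ i, g i * v i| ≤ ∑ i, |g i * v i| := abs_sum_le_sum_abs _ _
    _ ≤ ∑ _i : Fin m, ‖g‖ * ‖v‖ := sum_le_sum fun i _ => by
      rw [abs_mul]; exact mul_le_mul (norm_le_pi_norm g i) (norm_le_pi_norm v i)
        (abs_nonneg _) (norm_nonneg _)
    _ = m * (‖g‖ * ‖v‖) := by simp
  simp only [gaussFunctional, LinearMap.coe_mk, AddHom.coe_mk, abs_mul, abs_div, abs_one,
    Nat.abs_cast]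
  rw [div_mul_eq_mul_div, one_mul, div_le_iff₀ (by positivity), mul_comm]
  exact hsum

noncomputable def gaussSup (m : ℕ) (A : Set (Fin m → ℝ)) (g : Fin m → ℝ) : ℝ :=
  sSup (gaussFunctional m g '' A)

lemma gaussComp_eq_integral_gaussSup (m : ℕ) (A : Set (Fin m → ℝ)) :
    gaussComp m A = ∫ g, gaussSup m A g ∂(Measure.pi fun _ : Fin m => gaussianReal 0 1) :=
  rfl

section GaussSup

variable {m : ℕ} {A B : Set (Fin m → ℝ)}

lemma gaussFunctional_le_of_norm_le {R : ℝ} (hR : ∀ v ∈ A, ‖v‖ ≤ R) (g : Fin m → ℝ)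
    {v : Fin m → ℝ} (hv : v ∈ A) : gaussFunctional m g v ≤ ‖g‖ * R :=
  (le_abs_self _).trans <| (abs_gaussFunctional_le m g v).trans <|
    mul_le_mul_of_nonneg_left (hR v hv) (norm_nonneg g)

lemma bddAbove_gaussFunctional_image {R : ℝ} (hR : ∀ v ∈ A, ‖v‖ ≤ R) (g : Fin m → ℝ) :
    BddAbove (gaussFunctional m g '' A) :=
  ⟨‖g‖ * R, by rintro _ ⟨v, hv, rfl⟩; exact gaussFunctional_le_of_norm_le hR g hv⟩

lemma gaussSup_le_add (hA : A.Nonempty) {R : ℝ} (hR : ∀ v ∈ A, ‖v‖ ≤ R) (g g' : Fin m → ℝ) :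
    gaussSup m A g ≤ gaussSup m A g' + ‖g - g'‖ * R := by
  refine csSup_le (hA.image _) ?_
  rintro _ ⟨v, hv, rfl⟩
  have h := le_csSup (bddAbove_gaussFunctional_image hR g') ⟨v, hv, rfl⟩
  have hsplit := gaussFunctional_add m g' (g - g') v
  rw [add_sub_cancel] at hsplit
  rw [hsplit]
  exact add_le_add h (gaussFunctional_le_of_norm_le hR (g - g') hv)

lemma gaussSup_zero (hA : A.Nonempty) : gaussSup m A 0 = 0 := by
  have h : gaussFunctional m 0 = 0 := by ext; simp [gaussFunctional]
  rw [gaussSup, h]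
  exact (congrArg sSup (hA.image_const 0)).trans (csSup_singleton 0)

lemma abs_gaussSup_le (hA : A.Nonempty) {R : ℝ} (hR : ∀ v ∈ A, ‖v‖ ≤ R) (g : Fin m → ℝ) :
    |gaussSup m A g| ≤ ‖g‖ * R := by
  have h₁ := gaussSup_le_add hA hR g 0
  have h₂ := gaussSup_le_add hA hR 0 g
  rw [gaussSup_zero hA, sub_zero] at h₁
  rw [gaussSup_zero hA, zero_sub, norm_neg] at h₂
  exact abs_le.mpr ⟨by linarith, by linarith⟩

lemma integrable_gaussSup (hA : A.Nonempty) (hA' : Bornology.IsBounded A) :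
    Integrable (gaussSup m A) (Measure.pi fun _ : Fin m => gaussianReal 0 1) := by
  obtain ⟨R, hR⟩ := hA'.exists_norm_le
  have hcont : Continuous (gaussSup m A) :=
    (LipschitzWith.of_le_add_mul' R fun g g' => by
      rw [dist_eq_norm, mul_comm]; exact gaussSup_le_add hA hR g g').continuous
  refine ((integrable_norm_pi_gaussianReal _ _).mul_const R).mono' hcont.aestronglyMeasurable ?_
  exact Filter.Eventually.of_forall fun g => abs_gaussSup_le hA hR g

lemma gaussSup_le_of_subset (hB : B.Nonempty) (hA : Bornology.IsBounded A) {γ : ℝ} (hγ : 0 ≤ γ)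
    (hBA : B ⊆ (1 + γ) • convexHull ℝ A + (-γ) • convexHull ℝ A) (g : Fin m → ℝ) :
    gaussSup m B g ≤ (1 + γ) * gaussSup m A g + γ * gaussSup m A (-g) := by
  obtain ⟨R, hR⟩ := hA.exists_norm_le
  have h := (gaussFunctional m g).csSup_image_le_of_subset_add_smul_convexHull hB
    (bddAbove_gaussFunctional_image hR g)
    (by rw [← gaussFunctional_neg]; exact bddAbove_gaussFunctional_image hR (-g)) hγ hBA
  rwa [← gaussFunctional_neg] at h

theorem gaussComp_le_of_subset (hA : A.Nonempty) (hA' : Bornology.IsBounded A)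
    (hB : B.Nonempty) (hB' : Bornology.IsBounded B) {γ : ℝ} (hγ : 0 ≤ γ)
    (hBA : B ⊆ (1 + γ) • convexHull ℝ A + (-γ) • convexHull ℝ A) :
    gaussComp m B ≤ (1 + 2 * γ) * gaussComp m A := by
  have hint := integrable_gaussSup hA hA'
  simp only [gaussComp_eq_integral_gaussSup]
  calc ∫ g, gaussSup m B g ∂_
      ≤ ∫ g, ((1 + γ) * gaussSup m A g + γ * gaussSup m A (-g)) ∂_ :=
        integral_mono (integrable_gaussSup hB hB')
          ((hint.const_mul _).add (hint.comp_neg.const_mul _))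
          (gaussSup_le_of_subset hB hA' hγ hBA)
    _ = (1 + 2 * γ) * ∫ g, gaussSup m A g ∂_ := by
        rw [integral_add (hint.const_mul _) (hint.comp_neg.const_mul _), integral_const_mul,
          integral_const_mul, integral_neg_eq_self]
        ring

theorem gaussComp_le_pow_mul_of_subset {k : ℕ} {G : ℕ → Set (Fin m → ℝ)}
    (hne : ∀ j ≤ k, (G j).Nonempty) (hbd : ∀ j ≤ k, Bornology.IsBounded (G j))
    {γ : ℝ} (hγ : 0 ≤ γ)
    (hstep : ∀ j < k,
      G (j + 1) ⊆ (1 + γ) • convexHull ℝ (G j) + (-γ) • convexHull ℝ (G j)) :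
    gaussComp m (G k) ≤ (1 + 2 * γ) ^ k * gaussComp m (G 0) := by
  induction k with
  | zero => simp
  | succ k ih =>
    have ih' := ih (fun j hj => hne j (by omega)) (fun j hj => hbd j (by omega))
      (fun j hj => hstep j (by omega))
    calc gaussComp m (G (k + 1))
        ≤ (1 + 2 * γ) * gaussComp m (G k) :=
          gaussComp_le_of_subset (hne k (by omega)) (hbd k (by omega)) (hne (k + 1) le_rfl)
            (hbd (k + 1) le_rfl) hγ (hstep k k.lt_succ_self)
      _ ≤ (1 + 2 * γ) * ((1 + 2 * γ) ^ k * gaussComp m (G 0)) :=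
          mul_le_mul_of_nonneg_left ih' (by linarith)
      _ = (1 + 2 * γ) ^ (k + 1) * gaussComp m (G 0) := by ring

end GaussSup

theorem stmt17_general (m : ℕ) (k : ℕ) (G : ℕ → Set (Fin m → ℝ))
    (hne : ∀ j ≤ k, (G j).Nonempty) (hbd : ∀ j ≤ k, Bornology.IsBounded (G j))
    (γ : ℝ) (hγ : 0 ≤ γ)
    (hstep : ∀ j < k,
      G (j + 1) ⊆ (1 + γ) • convexHull ℝ (G j) + (-γ) • convexHull ℝ (G j))
    (γ' : ℝ) (hγ' : 0 ≤ γ')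
    (hmax : G k ⊆ (1 + γ') • convexHull ℝ (G 0) + (-γ') • convexHull ℝ (G 0)) :
    gaussComp m (G k) ≤ min ((1 + 2 * γ) ^ k) (1 + 2 * γ') * gaussComp m (G 0) := by
  rcases min_choice ((1 + 2 * γ) ^ k) (1 + 2 * γ') with h | h <;> rw [h]
  · exact gaussComp_le_pow_mul_of_subset hne hbd hγ hstep
  · exact gaussComp_le_of_subset (hne 0 k.zero_le) (hbd 0 k.zero_le) (hne k le_rfl)
      (hbd k le_rfl) hγ' hmax

theorem stmt17 (m : ℕ) (hm : 1 ≤ m) (k : ℕ) (G : ℕ → Set (Fin m → ℝ))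
    (hne : ∀ j ≤ k, (G j).Nonempty) (hbd : ∀ j ≤ k, Bornology.IsBounded (G j))
    (γ : ℝ) (hγ : 0 ≤ γ)
    (hstep : ∀ j < k,
      G (j + 1) ⊆ (1 + γ) • convexHull ℝ (G j) + (-γ) • convexHull ℝ (G j))
    (γ' : ℝ) (hγ' : 0 ≤ γ')
    (hmax : G k ⊆ (1 + γ') • convexHull ℝ (G 0) + (-γ') • convexHull ℝ (G 0)) :
    gaussComp m (G k) ≤ min ((1 + 2 * γ) ^ k) (1 + 2 * γ') * gaussComp m (G 0) :=
  stmt17_general m k G hne hbd γ hγ hstep γ' hγ' hmax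
end
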